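/- arXiv:2307.09229 — 11 statements merged into one kernel-verified Lean document; each statement's English description precedes it below -/
import Mathlib

section
/- Let h₁ : (a, f) → (a', f') and h₂ : (b, g) → (b', g') be morphisms of modules over the Drinfeld quiver Q_z. Then h₁ ⊗ h₂ : a ⊗ b → a' ⊗ b' is a morphism of modules (a ⊗ b, f ⊗̂ g) → (a' ⊗ b', f' ⊗̂ g'), i.e. (h₁ ⊗ h₂) ∘ (f ⊗̂ g) = (f' ⊗̂ g') ∘ (id_z ⊗ (h₁ ⊗ h₂)). -/
/-!
Statement 0: If `h₁ : (a, f) → (a', f')` and `h₂ : (b, g) → (b', g')` are morphisms of modules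
over the Drinfeld quiver `Q_z`, then `h₁ ⊗ h₂` is a morphism of modules
`(a ⊗ b, f ⊗̂ g) → (a' ⊗ b', f' ⊗̂ g')`.
-/

open CategoryTheory MonoidalCategory

universe v u

variable {k : Type*} [Field k]
variable {A : Type u} [Category.{v} A] [MonoidalCategory A]
  [Preadditive A] [CategoryTheory.Linear k A] [MonoidalPreadditive A] [MonoidalLinear k A]

/-- The fusion product `f ⊗̂ g` of two modules `(a, f)` and `(b, g)` over the Drinfeld quiver
`Q_z` of an object `z` of the Drinfeld center of `A`. -/
noncomputable def fus (z : CategoryTheory.Center A) {a b : A}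
    (f : z.1 ⊗ a ⟶ a) (g : z.1 ⊗ b ⟶ b) : z.1 ⊗ (a ⊗ b) ⟶ a ⊗ b :=
  (α_ z.1 a b).inv ≫ (f ▷ b)
    + (α_ z.1 a b).inv ≫ ((z.2.β a).hom ▷ b) ≫ (α_ a z.1 b).hom ≫ (a ◁ g)

/-! The fusion action is the sum of the action of `z` on the left factor and, after braiding `z`
past the left factor, its action on the right factor. The map `h₁ ⊗ h₂` intertwines each summand
separately, the second one because the half-braiding is natural. -/

section

omit [Preadditive A] [MonoidalPreadditive A]

variable {a a' b b' : A}

theorem whiskerRight_action_comp_tensorHom {z : A} {f : z ⊗ a ⟶ a} {f' : z ⊗ a' ⟶ a'}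
    {h₁ : a ⟶ a'} (hh₁ : f ≫ h₁ = (z ◁ h₁) ≫ f') (h₂ : b ⟶ b') :
    (α_ z a b).inv ≫ (f ▷ b) ≫ (h₁ ⊗ₘ h₂) = (z ◁ (h₁ ⊗ₘ h₂)) ≫ (α_ z a' b').inv ≫ (f' ▷ b') := by
  rw [whiskerRight_comp_tensorHom, hh₁, ← tensorHom_comp_whiskerRight,
    ← id_tensorHom z (h₁ ⊗ₘ h₂), associator_inv_naturality_assoc, id_tensorHom]

theorem whiskerLeft_action_comp_tensorHom {z : A} {g : z ⊗ b ⟶ b} {g' : z ⊗ b' ⟶ b'}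
    {h₂ : b ⟶ b'} (hh₂ : g ≫ h₂ = (z ◁ h₂) ≫ g') (h₁ : a ⟶ a') :
    (a ◁ g) ≫ (h₁ ⊗ₘ h₂) = (h₁ ⊗ₘ (z ◁ h₂)) ≫ (a' ◁ g') := by
  rw [whiskerLeft_comp_tensorHom, hh₂, ← tensorHom_comp_whiskerLeft]

theorem Center.halfBraiding_whiskerRight_naturality (z : Center A) (h₁ : a ⟶ a') (h₂ : b ⟶ b') :
    (z.1 ◁ (h₁ ⊗ₘ h₂)) ≫ (α_ z.1 a' b').inv ≫ ((z.2.β a').hom ▷ b') ≫ (α_ a' z.1 b').hom =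
      (α_ z.1 a b).inv ≫ ((z.2.β a).hom ▷ b) ≫ (α_ a z.1 b).hom ≫ (h₁ ⊗ₘ (z.1 ◁ h₂)) := by
  calc _ = (α_ z.1 a b).inv ≫ (((z.1 ◁ h₁) ≫ (z.2.β a').hom) ⊗ₘ h₂) ≫ (α_ a' z.1 b').hom := by
        rw [← id_tensorHom, associator_inv_naturality_assoc, id_tensorHom,
          tensorHom_comp_whiskerRight_assoc]
    _ = (α_ z.1 a b).inv ≫ (((z.2.β a).hom ≫ (h₁ ▷ z.1)) ⊗ₘ h₂) ≫ (α_ a' z.1 b').hom := by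
        rw [z.2.naturality]
    _ = _ := by
        rw [← whiskerRight_comp_tensorHom, Category.assoc, ← tensorHom_id h₁ z.1,
          associator_naturality, id_tensorHom]

end

theorem tensorHom_is_module_morphism (z : CategoryTheory.Center A)
    {a a' b b' : A}
    (f : z.1 ⊗ a ⟶ a) (f' : z.1 ⊗ a' ⟶ a') (g : z.1 ⊗ b ⟶ b) (g' : z.1 ⊗ b' ⟶ b')
    (h₁ : a ⟶ a') (h₂ : b ⟶ b')
    (hh₁ : f ≫ h₁ = (z.1 ◁ h₁) ≫ f')
    (hh₂ : g ≫ h₂ = (z.1 ◁ h₂) ≫ g') :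
    fus z f g ≫ (h₁ ⊗ₘ h₂) = (z.1 ◁ (h₁ ⊗ₘ h₂)) ≫ fus z f' g' := by
  simp only [fus, Preadditive.add_comp, Preadditive.comp_add, Category.assoc]
  congr 1
  · exact whiskerRight_action_comp_tensorHom hh₁ h₂
  · rw [whiskerLeft_action_comp_tensorHom hh₂]
    simpa only [Category.assoc] using
      (Center.halfBraiding_whiskerRight_naturality z h₁ h₂ =≫ (a' ◁ g')).symm
end

section
/- The modules over the Drinfeld quiver Q_z form a monoidal category C_z: the tensor product of objects (a, f) and (b, g) is the fusion product (a ⊗ b, f ⊗̂ g), the tensor product of morphisms h₁, h₂ is h₁ ⊗ h₂, the unit object is (1, 0) (the monoidal unit of A with the zero morphism z ⊗ 1 → 1), and the associators and unitors of A are morphisms of modules making the pentagon and triangle axioms hold. In particular the associator α_{a,b,c} of A is a module morphism ((a,f) ⊗̂ (b,g)) ⊗̂ (c,h) → (a,f) ⊗̂ ((b,g) ⊗̂ (c,h)), and the unitors of A are module morphisms (a,f) ⊗̂ (1,0) → (a,f) and (1,0) ⊗̂ (a,f) → (a,f). -/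
open CategoryTheory MonoidalCategory

universe v u

variable {k : Type*} [Field k]
variable {A : Type u} [Category.{v} A] [MonoidalCategory A]
  [Preadditive A] [CategoryTheory.Linear k A] [MonoidalPreadditive A] [MonoidalLinear k A]

/-!
The fusion action on `a ⊗ b` is the sum of a left action (`z` acts on `a`) and a right action
(`z` is carried past `a` by the half-braiding and then acts on `b`). A tensor product `h₁ ⊗ h₂`
of module morphisms intertwines each summand separately: the left one by the interchange law,
the right one by naturality of the half-braiding as well.

For the associator, additivity of whiskering and the monoidality of the half-braiding,
`c_z(a ⊗ b) = (a ◁ c_z(b)) ∘ (c_z(a) ▷ b)` up to associators, expand both sides into three terms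
(`z` acting on `a`, on `b`, on `c`) which agree pairwise by coherence. For the unitors, the
action of `z` on `𝟙` is zero and `c_z(𝟙)` is the identity up to unitors.
-/

theorem CategoryTheory.Center.halfBraiding_tensorUnit_hom {C : Type*} [Category C]
    [MonoidalCategory C] (z : Center C) :
    (z.2.β (𝟙_ C)).hom = (ρ_ z.1).hom ≫ (λ_ z.1).inv := by
  have h := congrArg Center.Hom.f (braiding_tensorUnit_right z)
  rwa [Center.comp_f, Center.rightUnitor_hom_f, Center.leftUnitor_inv_f] at h

/-- `h : a ⟶ a'` is a morphism of modules `(a, f) ⟶ (a', f')` over the Drinfeld quiver. -/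
def IsModuleHom {C : Type*} [Category C] [MonoidalCategory C] {Z a a' : C}
    (f : Z ⊗ a ⟶ a) (f' : Z ⊗ a' ⟶ a') (h : a ⟶ a') : Prop :=
  f ≫ h = (Z ◁ h) ≫ f'

section Actions

variable {C : Type*} [Category C] [MonoidalCategory C]

def leftAction {Z a : C} (f : Z ⊗ a ⟶ a) (b : C) : Z ⊗ (a ⊗ b) ⟶ a ⊗ b :=
  (α_ Z a b).inv ≫ f ▷ b

def rightAction (z : Center C) (a : C) {b : C} (g : z.1 ⊗ b ⟶ b) : z.1 ⊗ (a ⊗ b) ⟶ a ⊗ b :=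
  (α_ z.1 a b).inv ≫ (z.2.β a).hom ▷ b ≫ (α_ a z.1 b).hom ≫ a ◁ g

theorem fus_eq_leftAction_add_rightAction [Preadditive C] (z : Center C) {a b : C}
    (f : z.1 ⊗ a ⟶ a) (g : z.1 ⊗ b ⟶ b) :
    fus z f g = leftAction f b + rightAction z a g :=
  rfl

end Actions

namespace IsModuleHom

section Monoidal

variable {C : Type*} [Category C] [MonoidalCategory C]

theorem leftAction {Z a a' b b' : C} {f : Z ⊗ a ⟶ a} {f' : Z ⊗ a' ⟶ a'} {h₁ : a ⟶ a'}
    (hf : IsModuleHom f f' h₁) (h₂ : b ⟶ b') :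
    IsModuleHom (leftAction f b) (leftAction f' b') (h₁ ⊗ₘ h₂) := by
  unfold IsModuleHom _root_.leftAction at *
  calc _ = (α_ Z a b).inv ≫ (f ≫ h₁) ▷ b ≫ a' ◁ h₂ := by simp [MonoidalCategory.tensorHom_def]
    _ = (α_ Z a b).inv ≫ (Z ◁ h₁) ▷ b ≫ f' ▷ b ≫ a' ◁ h₂ := by simp [hf]
    _ = (α_ Z a b).inv ≫ (Z ◁ h₁) ▷ b ≫ (Z ⊗ a') ◁ h₂ ≫ f' ▷ b' := by rw [whisker_exchange]
    _ = (Z ◁ (h₁ ⊗ₘ h₂)) ≫ (α_ Z a' b').inv ≫ f' ▷ b' := by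
      simp [MonoidalCategory.tensorHom_def]

theorem rightAction (z : Center C) {a a' b b' : C} {g : z.1 ⊗ b ⟶ b} {g' : z.1 ⊗ b' ⟶ b'}
    (h₁ : a ⟶ a') {h₂ : b ⟶ b'} (hg : IsModuleHom g g' h₂) :
    IsModuleHom (rightAction z a g) (rightAction z a' g') (h₁ ⊗ₘ h₂) := by
  unfold IsModuleHom _root_.rightAction at *
  calc _ = 𝟙 _ ⊗≫ (z.2.β a).hom ▷ b ⊗≫ (a ◁ g ≫ h₁ ▷ b) ⊗≫ a' ◁ h₂ ⊗≫ 𝟙 _ := by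
        rw [MonoidalCategory.tensorHom_def]; monoidal
    _ = 𝟙 _ ⊗≫ ((z.2.β a).hom ≫ h₁ ▷ z.1) ▷ b ⊗≫ a' ◁ (g ≫ h₂) ⊗≫ 𝟙 _ := by
        rw [whisker_exchange]; monoidal
    _ = 𝟙 _ ⊗≫ (z.1 ◁ h₁ ≫ (z.2.β a').hom) ▷ b ⊗≫ a' ◁ (z.1 ◁ h₂ ≫ g') ⊗≫ 𝟙 _ := by
        rw [z.2.naturality, hg]
    _ = 𝟙 _ ⊗≫ (z.1 ◁ h₁) ▷ b ⊗≫ ((z.2.β a').hom ▷ b ≫ (a' ⊗ z.1) ◁ h₂) ⊗≫ a' ◁ g' ⊗≫ 𝟙 _ := by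
        monoidal
    _ = 𝟙 _ ⊗≫ (z.1 ◁ h₁) ▷ b ⊗≫ ((z.1 ⊗ a') ◁ h₂ ≫ (z.2.β a').hom ▷ b') ⊗≫ a' ◁ g' ⊗≫ 𝟙 _ := by
        rw [whisker_exchange]
    _ = _ := by
        rw [MonoidalCategory.tensorHom_def]; monoidal

end Monoidal

section Preadditive

variable {C : Type*} [Category C] [MonoidalCategory C] [Preadditive C]

theorem add {Z a a' : C} {f₁ f₂ : Z ⊗ a ⟶ a} {f₁' f₂' : Z ⊗ a' ⟶ a'} {h : a ⟶ a'}
    (h₁ : IsModuleHom f₁ f₁' h) (h₂ : IsModuleHom f₂ f₂' h) :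
    IsModuleHom (f₁ + f₂) (f₁' + f₂') h := by
  unfold IsModuleHom at *
  rw [Preadditive.add_comp, Preadditive.comp_add, h₁, h₂]

theorem tensorHom (z : Center C) {a a' b b' : C} {f : z.1 ⊗ a ⟶ a} {f' : z.1 ⊗ a' ⟶ a'}
    {g : z.1 ⊗ b ⟶ b} {g' : z.1 ⊗ b' ⟶ b'} {h₁ : a ⟶ a'} {h₂ : b ⟶ b'}
    (hf : IsModuleHom f f' h₁) (hg : IsModuleHom g g' h₂) :
    IsModuleHom (fus z f g) (fus z f' g') (h₁ ⊗ₘ h₂) := by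
  rw [fus_eq_leftAction_add_rightAction, fus_eq_leftAction_add_rightAction]
  exact (hf.leftAction h₂).add (hg.rightAction z h₁)

variable [MonoidalPreadditive C] (z : Center C)

theorem associator_hom {a b c : C} (f : z.1 ⊗ a ⟶ a) (g : z.1 ⊗ b ⟶ b) (h : z.1 ⊗ c ⟶ c) :
    IsModuleHom (fus z (fus z f g) h) (fus z f (fus z g h)) (α_ a b c).hom := by
  simp only [IsModuleHom, fus, MonoidalPreadditive.add_whiskerRight,
    MonoidalPreadditive.whiskerLeft_add, Preadditive.add_comp, Preadditive.comp_add,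
    HalfBraiding.monoidal, comp_whiskerRight, MonoidalCategory.whiskerLeft_comp, Category.assoc]
  rw [add_assoc]
  congr 1
  · monoidal
  · congr 1 <;> monoidal

theorem rightUnitor_hom {a : C} (f : z.1 ⊗ a ⟶ a) :
    IsModuleHom (fus z f (0 : z.1 ⊗ 𝟙_ C ⟶ 𝟙_ C)) f (ρ_ a).hom := by
  simp [IsModuleHom, fus]

theorem leftUnitor_hom {a : C} (f : z.1 ⊗ a ⟶ a) :
    IsModuleHom (fus z (0 : z.1 ⊗ 𝟙_ C ⟶ 𝟙_ C) f) f (λ_ a).hom := by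
  simp [IsModuleHom, fus, Center.halfBraiding_tensorUnit_hom]

end Preadditive

end IsModuleHom

/-- The category `C_z` of modules over the Drinfeld quiver `Q_z` is monoidal:
* the tensor product of morphisms of modules is a morphism of modules (functoriality of `⊗̂`),
* the associator of `A` is a morphism of modules
  `((a,f) ⊗̂ (b,g)) ⊗̂ (c,h) → (a,f) ⊗̂ ((b,g) ⊗̂ (c,h))`,
* the right unitor of `A` is a morphism of modules `(a,f) ⊗̂ (𝟙_A, 0) → (a,f)`,
* the left unitor of `A` is a morphism of modules `(𝟙_A, 0) ⊗̂ (a,f) → (a,f)`,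
* the pentagon and triangle axioms hold (they hold in `A`, hence in `C_z`, where composition
  and identities are those of `A`). -/
theorem drinfeldQuiverModules_monoidal (z : CategoryTheory.Center A) :
    -- tensor product of module morphisms is a module morphism
    (∀ {a a' b b' : A}
      (f : z.1 ⊗ a ⟶ a) (f' : z.1 ⊗ a' ⟶ a') (g : z.1 ⊗ b ⟶ b) (g' : z.1 ⊗ b' ⟶ b')
      (h₁ : a ⟶ a') (h₂ : b ⟶ b'),
      f ≫ h₁ = (z.1 ◁ h₁) ≫ f' → g ≫ h₂ = (z.1 ◁ h₂) ≫ g' →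
      fus z f g ≫ (h₁ ⊗ₘ h₂) = (z.1 ◁ (h₁ ⊗ₘ h₂)) ≫ fus z f' g') ∧
    -- the associator of `A` is a morphism of modules
    (∀ {a b c : A} (f : z.1 ⊗ a ⟶ a) (g : z.1 ⊗ b ⟶ b) (h : z.1 ⊗ c ⟶ c),
      fus z (fus z f g) h ≫ (α_ a b c).hom
        = (z.1 ◁ (α_ a b c).hom) ≫ fus z f (fus z g h)) ∧
    -- the right unitor of `A` is a morphism of modules `(a,f) ⊗̂ (𝟙,0) → (a,f)`
    (∀ {a : A} (f : z.1 ⊗ a ⟶ a),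
      fus z f (0 : z.1 ⊗ (𝟙_ A) ⟶ (𝟙_ A)) ≫ (ρ_ a).hom = (z.1 ◁ (ρ_ a).hom) ≫ f) ∧
    -- the left unitor of `A` is a morphism of modules `(𝟙,0) ⊗̂ (a,f) → (a,f)`
    (∀ {a : A} (f : z.1 ⊗ a ⟶ a),
      fus z (0 : z.1 ⊗ (𝟙_ A) ⟶ (𝟙_ A)) f ≫ (λ_ a).hom = (z.1 ◁ (λ_ a).hom) ≫ f) ∧
    -- the pentagon axiom
    (∀ a b c d : A,
      ((α_ a b c).hom ▷ d) ≫ (α_ a (b ⊗ c) d).hom ≫ (a ◁ (α_ b c d).hom)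
        = (α_ (a ⊗ b) c d).hom ≫ (α_ a b (c ⊗ d)).hom) ∧
    -- the triangle axiom
    (∀ a b : A,
      (α_ a (𝟙_ A) b).hom ≫ (a ◁ (λ_ b).hom) = ((ρ_ a).hom ▷ b)) :=
  ⟨fun _ _ _ _ _ _ hf hg => IsModuleHom.tensorHom z hf hg, IsModuleHom.associator_hom z,
    IsModuleHom.rightUnitor_hom z, IsModuleHom.leftUnitor_hom z, pentagon, triangle⟩
end

section
/- Let (a, f) be a module over the Drinfeld quiver Q_z such that a has a right dual a^∗ in A. Then ev_a ∘ (f† ⊗̂ f) = 0 and (f ⊗̂ f†) ∘ (id_z ⊗ coev_a) = 0; that is, ev_a : a^∗ ⊗ a → 1 is a morphism of modules (a^∗, f†) ⊗̂ (a, f) → (1, 0) and coev_a : 1 → a ⊗ a^∗ is a morphism of modules (1, 0) → (a, f) ⊗̂ (a^∗, f†). Consequently (a^∗, f†), together with ev_a and coev_a, is a right dual of (a, f) in the monoidal category C_z of Q_z-modules with the fusion product; in particular, if A is rigid then C_z is rigid. -/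
/-!
Statement 2: For a module `(a, f)` over the Drinfeld quiver `Q_z` such that `a` has a right dual
`a^∗` in `A`, the evaluation and coevaluation of `a` are morphisms of modules
`(a^∗, f†) ⊗̂ (a, f) → (𝟙, 0)` and `(𝟙, 0) → (a, f) ⊗̂ (a^∗, f†)`; consequently `(a^∗, f†)`
together with these is a right dual of `(a, f)` in `C_z`.
-/

open CategoryTheory MonoidalCategory

universe v u

variable {k : Type*} [Field k]
variable {A : Type u} [Category.{v} A] [MonoidalCategory A]
  [Preadditive A] [CategoryTheory.Linear k A] [MonoidalPreadditive A] [MonoidalLinear k A]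

/-- The action `f† : z ⊗ a^∗ ⟶ a^∗` of the right dual module `(a^∗, f†)` of a module `(a, f)`
over the Drinfeld quiver `Q_z`, where `a^∗` is a right dual of `a` with evaluation `ev` and
coevaluation `coev`. -/
noncomputable def fdag (z : CategoryTheory.Center A) {a aS : A} (f : z.1 ⊗ a ⟶ a)
    (ev : aS ⊗ a ⟶ 𝟙_ A) (coev : 𝟙_ A ⟶ a ⊗ aS) : z.1 ⊗ aS ⟶ aS :=
  - ((z.2.β aS).hom ≫ (ρ_ (aS ⊗ z.1)).inv ≫ ((aS ⊗ z.1) ◁ coev)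
      ≫ (α_ aS z.1 (a ⊗ aS)).hom ≫ (aS ◁ (α_ z.1 a aS).inv) ≫ (aS ◁ (f ▷ aS))
      ≫ (α_ aS a aS).inv ≫ (ev ▷ aS) ≫ (λ_ aS).hom)

lemma whiskerLeft_neg' (X : A) {P Q : A} (g : P ⟶ Q) : X ◁ (-g) = -(X ◁ g) :=
  eq_neg_of_add_eq_zero_left (by rw [← MonoidalPreadditive.whiskerLeft_add]; simp)

lemma neg_whiskerRight' {P Q : A} (g : P ⟶ Q) (X : A) : (-g) ▷ X = -(g ▷ X) :=
  eq_neg_of_add_eq_zero_left (by rw [← MonoidalPreadditive.add_whiskerRight]; simp)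

section HBUnit

variable (z : CategoryTheory.Center A)

lemma hb_unit_aux₁ :
    (α_ (𝟙_ A) (𝟙_ A) z.1).hom ≫ (𝟙_ A ◁ (z.2.β (𝟙_ A)).inv) ≫ (α_ (𝟙_ A) z.1 (𝟙_ A)).inv
        ≫ ((λ_ z.1).hom ▷ (𝟙_ A)) =
      ((λ_ (𝟙_ A)).hom ▷ z.1) ≫ (z.2.β (𝟙_ A)).inv := by
  monoidal

lemma hb_unit_aux₂ :
    ((z.2.β (𝟙_ A)).hom ▷ (𝟙_ A)) ≫ ((λ_ z.1).hom ▷ (𝟙_ A)) = (ρ_ z.1).hom ▷ (𝟙_ A) :=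
  calc
    ((z.2.β (𝟙_ A)).hom ▷ (𝟙_ A)) ≫ ((λ_ z.1).hom ▷ (𝟙_ A))
      = ((z.2.β (𝟙_ A)).hom ▷ (𝟙_ A)) ≫ (α_ (𝟙_ A) z.1 (𝟙_ A)).hom
          ≫ (α_ (𝟙_ A) z.1 (𝟙_ A)).inv ≫ ((λ_ z.1).hom ▷ (𝟙_ A)) := by monoidal
    _ = ((z.2.β (𝟙_ A)).hom ▷ (𝟙_ A)) ≫ (α_ (𝟙_ A) z.1 (𝟙_ A)).hom
          ≫ (𝟙_ A ◁ (z.2.β (𝟙_ A)).hom) ≫ (𝟙_ A ◁ (z.2.β (𝟙_ A)).inv)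
          ≫ (α_ (𝟙_ A) z.1 (𝟙_ A)).inv ≫ ((λ_ z.1).hom ▷ (𝟙_ A)) := by
      simp
    _ = (α_ z.1 (𝟙_ A) (𝟙_ A)).hom ≫ (z.2.β (𝟙_ A ⊗ 𝟙_ A)).hom
          ≫ (α_ (𝟙_ A) (𝟙_ A) z.1).hom ≫ (𝟙_ A ◁ (z.2.β (𝟙_ A)).inv)
          ≫ (α_ (𝟙_ A) z.1 (𝟙_ A)).inv ≫ ((λ_ z.1).hom ▷ (𝟙_ A)) := by
      rw [z.2.monoidal]; monoidal
    _ = (α_ z.1 (𝟙_ A) (𝟙_ A)).hom ≫ (z.2.β (𝟙_ A ⊗ 𝟙_ A)).hom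
          ≫ (((λ_ (𝟙_ A)).hom ▷ z.1) ≫ (z.2.β (𝟙_ A)).inv) := by
      rw [← hb_unit_aux₁]
    _ = (α_ z.1 (𝟙_ A) (𝟙_ A)).hom ≫ (z.1 ◁ (λ_ (𝟙_ A)).hom)
          ≫ (z.2.β (𝟙_ A)).hom ≫ (z.2.β (𝟙_ A)).inv := by
      slice_lhs 2 3 => rw [← z.2.naturality]
      simp only [Category.assoc]
    _ = (α_ z.1 (𝟙_ A) (𝟙_ A)).hom ≫ (z.1 ◁ (λ_ (𝟙_ A)).hom) := by simp
    _ = (ρ_ z.1).hom ▷ (𝟙_ A) := by monoidal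

lemma hb_unit : (z.2.β (𝟙_ A)).hom = (ρ_ z.1).hom ≫ (λ_ z.1).inv := by
  have h : (z.2.β (𝟙_ A)).hom ≫ (λ_ z.1).hom = (ρ_ z.1).hom := by
    rw [← whiskerRight_iff, comp_whiskerRight, hb_unit_aux₂]
  rw [← h]; simp

end HBUnit

section Main

variable (z : CategoryTheory.Center A) {a aS : A}
  (f : z.1 ⊗ a ⟶ a) (ev : aS ⊗ a ⟶ 𝟙_ A) (coev : 𝟙_ A ⟶ a ⊗ aS)

lemma transpose
    (zig : (coev ▷ a) ≫ (α_ a aS a).hom ≫ (a ◁ ev) = (λ_ a).hom ≫ (ρ_ a).inv)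
    (X : A) (φ : X ⊗ a ⟶ 𝟙_ A) :
    (((ρ_ X).inv ≫ (X ◁ coev) ≫ (α_ X a aS).inv ≫ (φ ▷ aS) ≫ (λ_ aS).hom) ▷ a) ≫ ev = φ :=
  calc
    (((ρ_ X).inv ≫ (X ◁ coev) ≫ (α_ X a aS).inv ≫ (φ ▷ aS) ≫ (λ_ aS).hom) ▷ a) ≫ ev
      = ((ρ_ X).inv ▷ a) ≫ ((X ◁ coev) ▷ a) ≫ ((α_ X a aS).inv ▷ a)
          ≫ (α_ (X ⊗ a) aS a).hom ≫ (φ ▷ (aS ⊗ a)) ≫ (𝟙_ A ◁ ev)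
          ≫ (λ_ (𝟙_ A)).hom := by monoidal
    _ = ((ρ_ X).inv ▷ a) ≫ ((X ◁ coev) ▷ a) ≫ ((α_ X a aS).inv ▷ a)
          ≫ (α_ (X ⊗ a) aS a).hom ≫ ((X ⊗ a) ◁ ev) ≫ (φ ▷ 𝟙_ A)
          ≫ (λ_ (𝟙_ A)).hom := by rw [← whisker_exchange_assoc]
    _ = (X ◁ (λ_ a).inv) ≫ (X ◁ ((coev ▷ a) ≫ (α_ a aS a).hom ≫ (a ◁ ev)))
          ≫ (X ◁ (ρ_ a).hom) ≫ φ := by monoidal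
    _ = φ := by rw [zig]; monoidal

lemma fdag_eq :
    fdag z f ev coev = -((z.2.β aS).hom ≫ ((ρ_ (aS ⊗ z.1)).inv ≫ ((aS ⊗ z.1) ◁ coev)
      ≫ (α_ (aS ⊗ z.1) a aS).inv
      ≫ (((α_ aS z.1 a).hom ≫ (aS ◁ f) ≫ ev) ▷ aS) ≫ (λ_ aS).hom)) := by
  unfold fdag; congr 1; monoidal

lemma fdag_eq2 :
    fdag z f ev coev = -((z.2.β aS).hom
      ≫ (aS ◁ ((ρ_ z.1).inv ≫ (z.1 ◁ coev) ≫ (α_ z.1 a aS).inv ≫ (f ▷ aS)))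
      ≫ (α_ aS a aS).inv ≫ (ev ▷ aS) ≫ (λ_ aS).hom) := by
  unfold fdag; congr 1; monoidal

lemma keyA
    (zig : (coev ▷ a) ≫ (α_ a aS a).hom ≫ (a ◁ ev) = (λ_ a).hom ≫ (ρ_ a).inv) :
    ((fdag z f ev coev) ▷ a) ≫ ev
      = -(((z.2.β aS).hom ▷ a) ≫ (α_ aS z.1 a).hom ≫ (aS ◁ f) ≫ ev) := by
  rw [fdag_eq z f ev coev, neg_whiskerRight', Preadditive.neg_comp, comp_whiskerRight,
    Category.assoc, transpose ev coev zig (aS ⊗ z.1) ((α_ aS z.1 a).hom ≫ (aS ◁ f) ≫ ev)]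

lemma snake_slide
    (zig : (coev ▷ a) ≫ (α_ a aS a).hom ≫ (a ◁ ev) = (λ_ a).hom ≫ (ρ_ a).inv)
    (W : A) (g0 : W ⟶ a ⊗ aS) :
    (λ_ W).inv ≫ (coev ▷ W) ≫ (α_ a aS W).hom ≫ (a ◁ (aS ◁ g0))
        ≫ (a ◁ (α_ aS a aS).inv) ≫ (a ◁ (ev ▷ aS)) ≫ (a ◁ (λ_ aS).hom) = g0 :=
  calc
    (λ_ W).inv ≫ (coev ▷ W) ≫ (α_ a aS W).hom ≫ (a ◁ (aS ◁ g0))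
        ≫ (a ◁ (α_ aS a aS).inv) ≫ (a ◁ (ev ▷ aS)) ≫ (a ◁ (λ_ aS).hom)
      = (λ_ W).inv ≫ (coev ▷ W) ≫ ((a ⊗ aS) ◁ g0) ≫ (α_ a aS (a ⊗ aS)).hom
          ≫ (a ◁ (α_ aS a aS).inv) ≫ (a ◁ (ev ▷ aS)) ≫ (a ◁ (λ_ aS).hom) := by monoidal
    _ = (λ_ W).inv ≫ (𝟙_ A ◁ g0) ≫ (coev ▷ (a ⊗ aS)) ≫ (α_ a aS (a ⊗ aS)).hom
          ≫ (a ◁ (α_ aS a aS).inv) ≫ (a ◁ (ev ▷ aS)) ≫ (a ◁ (λ_ aS).hom) := by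
      rw [← whisker_exchange_assoc]
    _ = g0 ≫ (λ_ (a ⊗ aS)).inv ≫ (α_ (𝟙_ A) a aS).inv
          ≫ (((coev ▷ a) ≫ (α_ a aS a).hom ≫ (a ◁ ev)) ▷ aS)
          ≫ ((ρ_ a).hom ▷ aS) := by monoidal
    _ = g0 := by rw [zig]; monoidal

lemma keyB
    (zig : (coev ▷ a) ≫ (α_ a aS a).hom ≫ (a ◁ ev) = (λ_ a).hom ≫ (ρ_ a).inv) :
    (z.1 ◁ coev) ≫ (α_ z.1 a aS).inv ≫ ((z.2.β a).hom ▷ aS) ≫ (α_ a z.1 aS).hom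
        ≫ (a ◁ fdag z f ev coev)
      = -((z.1 ◁ coev) ≫ (α_ z.1 a aS).inv ≫ (f ▷ aS)) := by
  have main : ∀ g0 : z.1 ⟶ a ⊗ aS,
      (z.1 ◁ coev) ≫ (α_ z.1 a aS).inv ≫ ((z.2.β a).hom ▷ aS) ≫ (α_ a z.1 aS).hom
          ≫ (a ◁ (-((z.2.β aS).hom ≫ (aS ◁ g0) ≫ (α_ aS a aS).inv ≫ (ev ▷ aS)
              ≫ (λ_ aS).hom)))
        = -((ρ_ z.1).hom ≫ g0) := by
    intro g0
    have hm : (α_ z.1 a aS).inv ≫ ((z.2.β a).hom ▷ aS) ≫ (α_ a z.1 aS).hom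
          ≫ (a ◁ (z.2.β aS).hom) = (z.2.β (a ⊗ aS)).hom ≫ (α_ a aS z.1).hom := by
      rw [z.2.monoidal]; simp
    simp only [whiskerLeft_neg', Preadditive.comp_neg]
    rw [neg_inj]
    simp only [MonoidalCategory.whiskerLeft_comp, Category.assoc]
    slice_lhs 2 5 => rw [hm]
    slice_lhs 1 2 => rw [z.2.naturality]
    rw [hb_unit]
    simp only [Category.assoc]
    rw [snake_slide ev coev zig z.1 g0]
  rw [fdag_eq2 z f ev coev, main ((ρ_ z.1).inv ≫ (z.1 ◁ coev) ≫ (α_ z.1 a aS).inv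
    ≫ (f ▷ aS))]
  simp

end Main

/-- `ev_a` and `coev_a` are morphisms of `Q_z`-modules, exhibiting `(a^∗, f†)` as a right dual
of `(a, f)` in the category of `Q_z`-modules. -/
theorem dual_module_is_right_dual (z : CategoryTheory.Center A) {a aS : A}
    (f : z.1 ⊗ a ⟶ a)
    (ev : aS ⊗ a ⟶ 𝟙_ A) (coev : 𝟙_ A ⟶ a ⊗ aS)
    (zig : (coev ▷ a) ≫ (α_ a aS a).hom ≫ (a ◁ ev) = (λ_ a).hom ≫ (ρ_ a).inv)
    (zag : (aS ◁ coev) ≫ (α_ aS a aS).inv ≫ (ev ▷ aS) = (ρ_ aS).hom ≫ (λ_ aS).inv) :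
    -- `ev_a : (a^∗, f†) ⊗̂ (a, f) → (𝟙, 0)` is a morphism of modules
    fus z (fdag z f ev coev) f ≫ ev = 0 ∧
    -- `coev_a : (𝟙, 0) → (a, f) ⊗̂ (a^∗, f†)` is a morphism of modules
    (z.1 ◁ coev) ≫ fus z f (fdag z f ev coev) = 0 := by
  constructor
  · unfold fus
    rw [Preadditive.add_comp]
    simp only [Category.assoc]
    rw [keyA z f ev coev zig]
    simp
  · unfold fus
    rw [Preadditive.comp_add]
    rw [keyB z f ev coev zig]
    simp
end

section
/- If (a, f) and (b, g) are locally nilpotent modules over the Drinfeld quiver Q_z, with f^{∗n} = 0 and g^{∗m} = 0, then their fusion product is locally nilpotent; more precisely (f ⊗̂ g)^{∗(n+m)} = 0. -/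
/-!
Expanding `(f ⊗̂ g)^{∗N}` along `f ⊗̂ g = f ▷ b + (a ◁ g) ∘ (c_z(a) ▷ b)` gives a sum of words in the
two summands. By naturality of the half-braiding, each copy of `z` can be carried past the
`a`-factor to the `b`-factor, so every word factors through `f^{∗i} ⊗ g^{∗j}` with `i + j = N`.
For `N = n + m` we have `n ≤ i` or `m ≤ j`, so every word vanishes.
-/

open CategoryTheory MonoidalCategory

universe v u

variable {k : Type*} [Field k]
variable {A : Type u} [Category.{v} A] [MonoidalCategory A]
  [Preadditive A] [CategoryTheory.Linear k A] [MonoidalPreadditive A] [MonoidalLinear k A]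

/-- The `n`-th tensor power `z^{⊗n}` of an object `z` of the Drinfeld center of `A`. -/
noncomputable def zcpow (z : CategoryTheory.Center A) : ℕ → CategoryTheory.Center A
  | 0 => 𝟙_ (CategoryTheory.Center A)
  | n + 1 => z ⊗ zcpow z n

/-- The iterated action `f^{∗n} : z^{⊗n} ⊗ a ⟶ a` of a module `(a, f)` over the Drinfeld
quiver `Q_z` (suppressing associators). -/
noncomputable def fstar (z : CategoryTheory.Center A) {a : A} (f : z.1 ⊗ a ⟶ a) :
    (n : ℕ) → ((zcpow z n).1 ⊗ a ⟶ a)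
  | 0 => (λ_ a).hom
  | n + 1 => (α_ z.1 (zcpow z n).1 a).hom ≫ (z.1 ◁ fstar z f n) ≫ f

lemma AddMonoidHom.mem_closure_of_mapsTo {M N : Type*} [AddZeroClass M] [AddZeroClass N]
    (φ : M →+ N) {s : Set M} {t : Set N} (hst : Set.MapsTo φ s t) {x : M}
    (hx : x ∈ AddSubmonoid.closure s) : φ x ∈ AddSubmonoid.closure t :=
  (AddSubmonoid.closure_le (S := (AddSubmonoid.closure t).comap φ)).2
    (fun _ hy => AddSubmonoid.subset_closure (hst hy)) hx

section Monoidal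

variable {C : Type*} [Category C] [MonoidalCategory C] (z : Center C) {a b : C}

lemma fstar_succ {c : C} (h : z.1 ⊗ c ⟶ c) (n : ℕ) :
    fstar z h (n + 1) = (α_ z.1 (zcpow z n).1 c).hom ≫ (z.1 ◁ fstar z h n) ≫ h :=
  rfl

noncomputable def fusLeft (f : z.1 ⊗ a ⟶ a) : z.1 ⊗ (a ⊗ b) ⟶ a ⊗ b :=
  (α_ z.1 a b).inv ≫ (f ▷ b)

noncomputable def fusRight (g : z.1 ⊗ b ⟶ b) : z.1 ⊗ (a ⊗ b) ⟶ a ⊗ b :=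
  (α_ z.1 a b).inv ≫ ((z.2.β a).hom ▷ b) ≫ (α_ a z.1 b).hom ≫ (a ◁ g)

lemma whiskerLeft_tensorHom_fusLeft {x y : C} (f : z.1 ⊗ a ⟶ a) (u : x ⟶ a) (v : y ⟶ b) :
    (z.1 ◁ (u ⊗ₘ v)) ≫ fusLeft z f = (α_ z.1 x y).inv ≫ (((z.1 ◁ u) ≫ f) ⊗ₘ v) := by
  rw [fusLeft, ← id_tensorHom, associator_inv_naturality_assoc, ← tensorHom_id,
    tensorHom_comp_tensorHom]
  simp

lemma whiskerLeft_tensorHom_fusRight {x y : C} (g : z.1 ⊗ b ⟶ b) (u : x ⟶ a) (v : y ⟶ b) :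
    (z.1 ◁ (u ⊗ₘ v)) ≫ fusRight z g
      = (α_ z.1 x y).inv ≫ ((z.2.β x).hom ▷ y) ≫ (α_ x z.1 y).hom ≫ (u ⊗ₘ ((z.1 ◁ v) ≫ g)) := by
  rw [fusRight, ← id_tensorHom, associator_inv_naturality_assoc, ← tensorHom_id (z.2.β a).hom,
    tensorHom_comp_tensorHom_assoc, Category.comp_id, id_tensorHom, HalfBraiding.naturality]
  conv_lhs => rw [← Category.id_comp v]
  rw [← tensorHom_comp_tensorHom, ← tensorHom_id u z.1]
  simp only [Category.assoc]
  rw [associator_naturality_assoc, ← id_tensorHom a g, tensorHom_comp_tensorHom]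
  simp

def factorsThroughFstarTensor (f : z.1 ⊗ a ⟶ a) (g : z.1 ⊗ b ⟶ b) (N : ℕ) :
    Set ((zcpow z N).1 ⊗ (a ⊗ b) ⟶ a ⊗ b) :=
  {t | ∃ i j, i + j = N ∧
    ∃ φ : (zcpow z N).1 ⊗ (a ⊗ b) ⟶ ((zcpow z i).1 ⊗ a) ⊗ ((zcpow z j).1 ⊗ b),
      t = φ ≫ (fstar z f i ⊗ₘ fstar z g j)}

variable {z} {f : z.1 ⊗ a ⟶ a} {g : z.1 ⊗ b ⟶ b} {N : ℕ}

lemma comp_fusLeft_mem_factorsThroughFstarTensor {t : (zcpow z N).1 ⊗ (a ⊗ b) ⟶ a ⊗ b}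
    (ht : t ∈ factorsThroughFstarTensor z f g N) :
    (α_ z.1 (zcpow z N).1 (a ⊗ b)).hom ≫ (z.1 ◁ t) ≫ fusLeft z f
      ∈ factorsThroughFstarTensor z f g (N + 1) := by
  obtain ⟨i, j, rfl, φ, rfl⟩ := ht
  refine ⟨i + 1, j, by omega, (α_ _ _ _).hom ≫ (z.1 ◁ φ) ≫ (α_ _ _ _).inv ≫
    ((α_ z.1 (zcpow z i).1 a).inv ⊗ₘ 𝟙 _), ?_⟩
  simp only [whiskerLeft_comp, Category.assoc, whiskerLeft_tensorHom_fusLeft]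
  -- `erw`: `zcpow z (i + 1)` is `z ⊗ zcpow z i` only up to unfolding
  erw [Category.assoc, Category.assoc, Category.assoc, tensorHom_comp_tensorHom, fstar_succ,
    Iso.inv_hom_id_assoc, Category.id_comp]
  rfl

lemma comp_fusRight_mem_factorsThroughFstarTensor {t : (zcpow z N).1 ⊗ (a ⊗ b) ⟶ a ⊗ b}
    (ht : t ∈ factorsThroughFstarTensor z f g N) :
    (α_ z.1 (zcpow z N).1 (a ⊗ b)).hom ≫ (z.1 ◁ t) ≫ fusRight z g
      ∈ factorsThroughFstarTensor z f g (N + 1) := by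
  obtain ⟨i, j, rfl, φ, rfl⟩ := ht
  refine ⟨i, j + 1, by omega, (α_ _ _ _).hom ≫ (z.1 ◁ φ) ≫ (α_ _ _ _).inv ≫
    ((z.2.β _).hom ▷ _) ≫ (α_ _ _ _).hom ≫ (𝟙 _ ⊗ₘ (α_ z.1 (zcpow z j).1 b).inv), ?_⟩
  simp only [whiskerLeft_comp, Category.assoc, whiskerLeft_tensorHom_fusRight]
  erw [Category.assoc, Category.assoc, Category.assoc, Category.assoc, Category.assoc,
    tensorHom_comp_tensorHom, fstar_succ, Iso.inv_hom_id_assoc, Category.id_comp]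
  rfl

end Monoidal

section Preadditive

variable {C : Type*} [Category C] [MonoidalCategory C] [Preadditive C] {z : Center C} {a b : C}

lemma fus_eq_fusLeft_add_fusRight (f : z.1 ⊗ a ⟶ a) (g : z.1 ⊗ b ⟶ b) :
    fus z f g = fusLeft z f + fusRight z g :=
  rfl

variable [MonoidalPreadditive C]

def whiskerLeftSandwich {w x y c d : C} (p : c ⟶ w ⊗ x) (q : w ⊗ y ⟶ d) :
    (x ⟶ y) →+ (c ⟶ d) where
  toFun t := p ≫ (w ◁ t) ≫ q
  map_zero' := by simp
  map_add' _ _ := by simp [MonoidalPreadditive.whiskerLeft_add]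

lemma fstar_eq_zero_of_le {c : C} {h : z.1 ⊗ c ⟶ c} {n N : ℕ} (hn : fstar z h n = 0)
    (hnN : n ≤ N) : fstar z h N = 0 := by
  induction N, hnN using Nat.le_induction with
  | base => exact hn
  | succ N _ ih =>
    rw [fstar_succ, ih, MonoidalPreadditive.whiskerLeft_zero, Limits.zero_comp, Limits.comp_zero]
    rfl

lemma fstar_fus_mem_closure (f : z.1 ⊗ a ⟶ a) (g : z.1 ⊗ b ⟶ b) (N : ℕ) :
    fstar z (fus z f g) N ∈ AddSubmonoid.closure (factorsThroughFstarTensor z f g N) := by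
  induction N with
  | zero =>
    refine AddSubmonoid.subset_closure ⟨0, 0, rfl, (λ_ _).hom ≫ ((λ_ a).inv ⊗ₘ (λ_ b).inv), ?_⟩
    erw [Category.assoc, tensorHom_comp_tensorHom, Iso.inv_hom_id, Iso.inv_hom_id, id_tensorHom_id,
      Category.comp_id]
    rfl
  | succ N ih =>
    rw [fstar_succ, fus_eq_fusLeft_add_fusRight, Preadditive.comp_add, Preadditive.comp_add]
    exact add_mem
      ((whiskerLeftSandwich _ _).mem_closure_of_mapsTo
        (fun _ => comp_fusLeft_mem_factorsThroughFstarTensor) ih)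
      ((whiskerLeftSandwich _ _).mem_closure_of_mapsTo
        (fun _ => comp_fusRight_mem_factorsThroughFstarTensor) ih)

lemma eq_zero_of_mem_factorsThroughFstarTensor {f : z.1 ⊗ a ⟶ a} {g : z.1 ⊗ b ⟶ b} {n m : ℕ}
    (hf : fstar z f n = 0) (hg : fstar z g m = 0) {t : (zcpow z (n + m)).1 ⊗ (a ⊗ b) ⟶ a ⊗ b}
    (ht : t ∈ factorsThroughFstarTensor z f g (n + m)) : t = 0 := by
  obtain ⟨i, j, hij, φ, rfl⟩ := ht
  rcases le_or_gt n i with hni | hin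
  · simp [fstar_eq_zero_of_le hf hni]
  · simp [fstar_eq_zero_of_le hg (by omega : m ≤ j)]

end Preadditive

/-- The fusion product of locally nilpotent modules is locally nilpotent:
if `f^{∗n} = 0` and `g^{∗m} = 0` then `(f ⊗̂ g)^{∗(n+m)} = 0`. -/
theorem fus_locally_nilpotent (z : CategoryTheory.Center A) {a b : A}
    (f : z.1 ⊗ a ⟶ a) (g : z.1 ⊗ b ⟶ b) (n m : ℕ)
    (hf : fstar z f n = 0) (hg : fstar z g m = 0) :
    fstar z (fus z f g) (n + m) = 0 := by
  have hclosure : AddSubmonoid.closure (factorsThroughFstarTensor z f g (n + m)) ≤ ⊥ :=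
    AddSubmonoid.closure_le.2 fun _ ht => eq_zero_of_mem_factorsThroughFstarTensor hf hg ht
  exact hclosure (fstar_fus_mem_closure f g (n + m))
end

section
/- Let (a, f) be a module over the Drinfeld quiver Q_z such that a has a right dual a^∗ in A. If f^{∗n} = 0 for some n ∈ ℕ, then (f†)^{∗n} = 0; hence the right dual module of a locally nilpotent Q_z-module is locally nilpotent. -/
/-!
Statement 4: If `(a, f)` is a module over the Drinfeld quiver `Q_z`, where `a` has a right dual
`a^∗`, and `f^{∗n} = 0`, then `(f†)^{∗n} = 0`: the right dual of a locally nilpotent module is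
locally nilpotent.
-/

open CategoryTheory MonoidalCategory

universe v u

variable {k : Type*} [Field k]
variable {A : Type u} [Category.{v} A] [MonoidalCategory A]
  [Preadditive A] [CategoryTheory.Linear k A] [MonoidalPreadditive A] [MonoidalLinear k A]

/-!
Write `f† = -(c_z(a^∗) ≫ actionMate f)`, where `actionMate g : a^∗ ⊗ w ⟶ a^∗` is the transpose of
an action `g : w ⊗ a ⟶ a` across the duality. The snake identities make `actionMate` reverse
composition, and the half-braiding is natural and monoidal, so
`(f†)^{∗n} = (-1)^n • c_{z^{⊗n}}(a^∗) ≫ actionMate (r ▷ a ≫ f^{∗n})`, where `r` reverses the tensor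
factors of `z^{⊗n}` through the half-braiding. This vanishes together with `f^{∗n}`.
-/

section

variable {C : Type*} [Category C] [MonoidalCategory C] {a aS : C} [ExactPairing a aS]

noncomputable def actionMate {w : C} (g : w ⊗ a ⟶ a) : aS ⊗ w ⟶ aS :=
  𝟙 _ ⊗≫ (aS ⊗ w) ◁ η_ a aS ⊗≫ aS ◁ g ▷ aS ⊗≫ ε_ a aS ▷ aS ⊗≫ 𝟙 _

theorem actionMate_zero [Preadditive C] [MonoidalPreadditive C] (w : C) :
    actionMate (aS := aS) (0 : w ⊗ a ⟶ a) = 0 := by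
  simp [actionMate, monoidalComp]

theorem whiskerLeft_comp_actionMate {v w : C} (σ : v ⟶ w) (g : w ⊗ a ⟶ a) :
    aS ◁ σ ≫ actionMate g = actionMate (aS := aS) (σ ▷ a ≫ g) := by
  calc aS ◁ σ ≫ actionMate g
      = 𝟙 (aS ⊗ v) ⊗≫ ((aS ◁ σ) ▷ 𝟙_ C ≫ (aS ⊗ w) ◁ η_ a aS) ⊗≫ aS ◁ g ▷ aS
          ⊗≫ ε_ a aS ▷ aS ⊗≫ 𝟙 _ := by
        rw [actionMate]; monoidal
    _ = actionMate (σ ▷ a ≫ g) := by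
        rw [← whisker_exchange, actionMate]; monoidal

theorem actionMate_leftUnitor : actionMate (aS := aS) (λ_ a).hom = (ρ_ aS).hom := by
  calc actionMate (aS := aS) (λ_ a).hom
      = 𝟙 _ ⊗≫ (aS ◁ η_ a aS ⊗≫ ε_ a aS ▷ aS) ⊗≫ 𝟙 _ := by rw [actionMate]; monoidal
    _ = (ρ_ aS).hom := by rw [ExactPairing.coevaluation_evaluation'']; monoidal

theorem actionMate_whiskerRight_comp_actionMate {v w : C} (g : w ⊗ a ⟶ a) (f : v ⊗ a ⟶ a) :
    actionMate g ▷ v ≫ actionMate f =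
      (α_ aS w v).hom ≫ actionMate (aS := aS) ((α_ w v a).hom ≫ w ◁ f ≫ g) := by
  set u : aS ⊗ w ⊗ a ⟶ 𝟙_ C := aS ◁ g ≫ ε_ a aS
  set t : v ⟶ a ⊗ aS := 𝟙 _ ⊗≫ v ◁ η_ a aS ⊗≫ f ▷ aS
  calc actionMate g ▷ v ≫ actionMate f
      = 𝟙 _ ⊗≫ ((aS ⊗ w) ◁ η_ a aS) ▷ v ⊗≫ (u ▷ (aS ⊗ v) ≫ 𝟙_ C ◁ aS ◁ t)
          ⊗≫ ε_ a aS ▷ aS ⊗≫ 𝟙 _ := by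
        simp only [actionMate, u, t]; monoidal
    _ = 𝟙 _ ⊗≫ (((aS ⊗ w) ◁ η_ a aS) ▷ v ≫ ((aS ⊗ w) ⊗ a ⊗ aS) ◁ t)
          ⊗≫ (u ▷ ((aS ⊗ a) ⊗ aS) ≫ 𝟙_ C ◁ (ε_ a aS ▷ aS)) ⊗≫ 𝟙 _ := by
        rw [← whisker_exchange]; monoidal
    _ = 𝟙 _ ⊗≫ (aS ⊗ w) ◁ t ⊗≫ ((aS ⊗ w) ◁ (η_ a aS ▷ a ⊗≫ a ◁ ε_ a aS)) ▷ aS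
          ⊗≫ u ▷ aS ⊗≫ 𝟙 _ := by
        rw [← whisker_exchange, ← whisker_exchange]; monoidal
    _ = (α_ aS w v).hom ≫ actionMate ((α_ w v a).hom ≫ w ◁ f ≫ g) := by
        rw [ExactPairing.evaluation_coevaluation'', actionMate]; simp only [u, t]; monoidal

noncomputable def zcpowSnoc (z : Center C) : (n : ℕ) → ((zcpow z n).1 ⊗ z.1 ⟶ (zcpow z (n + 1)).1)
  | 0 => (λ_ z.1).hom ≫ (ρ_ z.1).inv
  | n + 1 => (α_ z.1 (zcpow z n).1 z.1).hom ≫ z.1 ◁ zcpowSnoc z n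

noncomputable def zcpowReverse (z : Center C) : (n : ℕ) → ((zcpow z n).1 ⟶ (zcpow z n).1)
  | 0 => 𝟙 _
  | n + 1 => (z.2.β (zcpow z n).1).hom ≫ zcpowReverse z n ▷ z.1 ≫ zcpowSnoc z n

noncomputable def fstarRev (z : Center C) {b : C} (f : z.1 ⊗ b ⟶ b) :
    (n : ℕ) → ((zcpow z n).1 ⊗ b ⟶ b)
  | 0 => (λ_ b).hom
  | n + 1 => (z.2.β (zcpow z n).1).hom ▷ b ≫ (α_ (zcpow z n).1 z.1 b).hom
      ≫ (zcpow z n).1 ◁ f ≫ fstarRev z f n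

theorem whiskerRight_zcpowSnoc_comp_fstar (z : Center C) {b : C} (f : z.1 ⊗ b ⟶ b) (n : ℕ) :
    zcpowSnoc z n ▷ b ≫ fstar z f (n + 1) =
      (α_ (zcpow z n).1 z.1 b).hom ≫ (zcpow z n).1 ◁ f ≫ fstar z f n := by
  induction n with
  | zero => simp only [zcpowSnoc, fstar]; monoidal
  | succ n ih =>
    show ((α_ z.1 (zcpow z n).1 z.1).hom ≫ z.1 ◁ zcpowSnoc z n) ▷ b
        ≫ (α_ z.1 (z.1 ⊗ (zcpow z n).1) b).hom ≫ z.1 ◁ fstar z f (n + 1) ≫ f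
      = (α_ (z.1 ⊗ (zcpow z n).1) z.1 b).hom ≫ (z.1 ⊗ (zcpow z n).1) ◁ f
        ≫ (α_ z.1 (zcpow z n).1 b).hom ≫ z.1 ◁ fstar z f n ≫ f
    calc _ = 𝟙 _ ⊗≫ z.1 ◁ (zcpowSnoc z n ▷ b ≫ fstar z f (n + 1)) ⊗≫ f := by monoidal
      _ = _ := by rw [ih]; monoidal

theorem fstarRev_eq_comp_fstar (z : Center C) {b : C} (f : z.1 ⊗ b ⟶ b) (n : ℕ) :
    fstarRev z f n = zcpowReverse z n ▷ b ≫ fstar z f n := by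
  induction n with
  | zero => rw [zcpowReverse, id_whiskerRight, Category.id_comp]; rfl
  | succ n ih =>
    show (z.2.β (zcpow z n).1).hom ▷ b ≫ (α_ (zcpow z n).1 z.1 b).hom
        ≫ (zcpow z n).1 ◁ f ≫ fstarRev z f n
      = ((z.2.β (zcpow z n).1).hom ≫ zcpowReverse z n ▷ z.1 ≫ zcpowSnoc z n) ▷ b
        ≫ fstar z f (n + 1)
    rw [ih, comp_whiskerRight, comp_whiskerRight, Category.assoc, Category.assoc,
      whiskerRight_zcpowSnoc_comp_fstar, whisker_exchange_assoc, associator_naturality_left_assoc]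

theorem fstar_neg [Preadditive C] [MonoidalPreadditive C] (z : Center C) {b : C}
    (f : z.1 ⊗ b ⟶ b) (n : ℕ) : fstar z (-f) n = (-1 : ℤ) ^ n • fstar z f n := by
  induction n with
  | zero => exact (one_zsmul _).symm
  | succ n ih =>
    have h : z.1 ◁ ((-1 : ℤ) ^ n • fstar z f n) = (-1 : ℤ) ^ n • (z.1 ◁ fstar z f n) :=
      (tensorLeft z.1).map_zsmul
    show (α_ z.1 (zcpow z n).1 b).hom ≫ z.1 ◁ fstar z (-f) n ≫ (-f)
      = (-1 : ℤ) ^ (n + 1) • ((α_ z.1 (zcpow z n).1 b).hom ≫ z.1 ◁ fstar z f n ≫ f)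
    simp only [ih, h, Preadditive.comp_zsmul, Preadditive.zsmul_comp, Preadditive.comp_neg,
      pow_succ, mul_neg_one, neg_smul]

theorem fdag_eq_neg_braiding_comp_actionMate [Preadditive C] (z : Center C) (f : z.1 ⊗ a ⟶ a) :
    fdag z f (ε_ a aS) (η_ a aS) = -((z.2.β aS).hom ≫ actionMate f) := by
  rw [fdag, actionMate]; congr 2; monoidal

theorem fstar_braiding_comp_actionMate (z : Center C) (f : z.1 ⊗ a ⟶ a) (n : ℕ) :
    fstar z ((z.2.β aS).hom ≫ actionMate f) n =
      ((zcpow z n).2.β aS).hom ≫ actionMate (fstarRev z f n) := by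
  induction n with
  | zero =>
    show (λ_ aS).hom = ((λ_ aS).hom ≫ (ρ_ aS).inv) ≫ actionMate (w := 𝟙_ C) (λ_ a).hom
    rw [actionMate_leftUnitor]
    simp
  | succ n ih =>
    show (α_ z.1 (zcpow z n).1 aS).hom ≫ z.1 ◁ fstar z ((z.2.β aS).hom ≫ actionMate f) n
        ≫ (z.2.β aS).hom ≫ actionMate f
      = ((z ⊗ zcpow z n).2.β aS).hom ≫ actionMate (w := z.1 ⊗ (zcpow z n).1)
          ((z.2.β (zcpow z n).1).hom ▷ a ≫ (α_ (zcpow z n).1 z.1 a).hom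
            ≫ (zcpow z n).1 ◁ f ≫ fstarRev z f n)
    rw [ih, ← whiskerLeft_comp_actionMate, Center.tensor_β]
    simp only [whiskerLeft_comp, Category.assoc, HalfBraiding.naturality_assoc,
      actionMate_whiskerRight_comp_actionMate, HalfBraiding.monoidal]
    simp

end

/-- If `f^{∗n} = 0` then `(f†)^{∗n} = 0`: the right dual module of a locally nilpotent module
over a Drinfeld quiver is locally nilpotent. -/
theorem fdag_locally_nilpotent (z : CategoryTheory.Center A) {a aS : A}
    (f : z.1 ⊗ a ⟶ a)
    (ev : aS ⊗ a ⟶ 𝟙_ A) (coev : 𝟙_ A ⟶ a ⊗ aS)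
    (zig : (coev ▷ a) ≫ (α_ a aS a).hom ≫ (a ◁ ev) = (λ_ a).hom ≫ (ρ_ a).inv)
    (zag : (aS ◁ coev) ≫ (α_ aS a aS).inv ≫ (ev ▷ aS) = (ρ_ aS).hom ≫ (λ_ aS).inv)
    (n : ℕ) (hf : fstar z f n = 0) :
    fstar z (fdag z f ev coev) n = 0 := by
  let _ : ExactPairing a aS := ⟨coev, ev, zag, zig⟩
  change fstar z (fdag z f (ε_ a aS) (η_ a aS)) n = 0
  rw [fdag_eq_neg_braiding_comp_actionMate, fstar_neg, fstar_braiding_comp_actionMate,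
    fstarRev_eq_comp_fstar, hf, Limits.comp_zero, actionMate_zero, Limits.comp_zero, smul_zero]
end

section
/- Let g : w → z be a morphism in the Drinfeld center Z(A), i.e. a morphism in A satisfying c_z(x) ∘ (g ⊗ id_x) = (id_x ⊗ g) ∘ c_w(x) for all x ∈ A. Then the assignment F_g(a, f) = (a, f ∘ (g ⊗ id_a)), which is the identity on morphisms, defines a strict monoidal functor from the category C_z of Q_z-modules to the category C_w of Q_w-modules: for all Q_z-modules (a, f₁) and (b, f₂) one has (f₁ ⊗̂ f₂) ∘ (g ⊗ id_{a⊗b}) = (f₁ ∘ (g ⊗ id_a)) ⊗̂ (f₂ ∘ (g ⊗ id_b)), and F_g sends the unit (1, 0) to the unit (1, 0). -/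
/-!
Statement 5: A morphism `g : w → z` in the Drinfeld center induces a strict monoidal functor
`F_g : C_z → C_w`, `F_g(a, f) = (a, f ∘ (g ⊗ id_a))`, identity on morphisms.
-/

open CategoryTheory MonoidalCategory

universe v u

variable {k : Type*} [Field k]
variable {A : Type u} [Category.{v} A] [MonoidalCategory A]
  [Preadditive A] [CategoryTheory.Linear k A] [MonoidalPreadditive A] [MonoidalLinear k A]

/-- A morphism `g : w ⟶ z` in the Drinfeld center `Z(A)` induces a strict monoidal functor
`F_g : C_z ⟶ C_w`, sending a `Q_z`-module `(a, f)` to the `Q_w`-module `(a, f ∘ (g ⊗ id_a))`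
and acting as the identity on morphisms:
* `F_g` is compatible with the fusion products,
* `F_g` sends the unit `(𝟙_A, 0)` of `C_z` to the unit `(𝟙_A, 0)` of `C_w`, and
* `F_g` sends morphisms of `Q_z`-modules to morphisms of `Q_w`-modules. -/
theorem center_hom_induces_strict_monoidal_functor {w z : CategoryTheory.Center A}
    (g : w ⟶ z) :
    -- compatibility with the fusion product
    (∀ {a b : A} (f₁ : z.1 ⊗ a ⟶ a) (f₂ : z.1 ⊗ b ⟶ b),
      (g.f ▷ (a ⊗ b)) ≫ fus z f₁ f₂ = fus w ((g.f ▷ a) ≫ f₁) ((g.f ▷ b) ≫ f₂)) ∧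
    -- the unit is sent to the unit
    ((g.f ▷ (𝟙_ A)) ≫ (0 : z.1 ⊗ (𝟙_ A) ⟶ (𝟙_ A)) = (0 : w.1 ⊗ (𝟙_ A) ⟶ (𝟙_ A))) ∧
    -- `F_g` is the identity on morphisms: module morphisms are sent to module morphisms
    (∀ {a b : A} (f₁ : z.1 ⊗ a ⟶ a) (f₂ : z.1 ⊗ b ⟶ b) (h : a ⟶ b),
      f₁ ≫ h = (z.1 ◁ h) ≫ f₂ →
      ((g.f ▷ a) ≫ f₁) ≫ h = (w.1 ◁ h) ≫ ((g.f ▷ b) ≫ f₂)) := by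
  refine ⟨fun {a b} f₁ f₂ => ?_, by simp, fun {a b} f₁ f₂ h hm => ?_⟩
  · simp only [fus, Preadditive.comp_add]
    congr 1
    · simp [associator_inv_naturality_left_assoc, comp_whiskerRight_assoc]
    · rw [associator_inv_naturality_left_assoc, ← comp_whiskerRight_assoc, g.comm,
        comp_whiskerRight_assoc]
      simp [whisker_exchange_assoc]
  · rw [Category.assoc, hm, ← whisker_exchange_assoc]
end

section
/- With the double Dx = x ⊕ x̄^∗ in the Drinfeld center Z(C) and the morphism φ : 1 → Dx ⊗ Dx defined below, one has c_{Dx}(Dx) ∘ φ = −φ, where c_{Dx}(Dx) : Dx ⊗ Dx → Dx ⊗ Dx denotes the half-braiding of Dx ∈ Z(C) evaluated at the underlying object Dx (equivalently, the braiding of Z(C) on Dx). -/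
/-!
The half-braiding of `Dx` at `Dx` maps the summand `x ⊗ x^∗` to `x^∗ ⊗ x` by `c_{x,x^∗}` and
the summand `x^∗ ⊗ x` back by `c_{x,x^∗}⁻¹`, so it exchanges the two components of `φ`; because
they enter `φ` with opposite signs, the result is `-φ`.
-/

open CategoryTheory MonoidalCategory

universe v u

namespace CategoryTheory.Center

variable {C : Type u} [Category.{v} C] [MonoidalCategory C] [BraidedCategory C]

theorem tensorHom_comp_β_of_braiding {D : Center C} {x y m : C} (ι : x ⟶ D.1) (j : y ⟶ m)
    (h : ι ▷ m ≫ (D.2.β m).hom = (β_ x m).hom ≫ m ◁ ι) :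
    (ι ⊗ₘ j) ≫ (D.2.β m).hom = (β_ x y).hom ≫ (j ⊗ₘ ι) := by
  rw [MonoidalCategory.tensorHom_def' ι j, Category.assoc, h, BraidedCategory.braiding_naturality_right_assoc,
    MonoidalCategory.tensorHom_def j ι]

theorem tensorHom_comp_β_of_braiding_inv {D : Center C} {x y m : C} (ι : x ⟶ D.1) (j : y ⟶ m)
    (h : ι ▷ m ≫ (D.2.β m).hom = (β_ m x).inv ≫ m ◁ ι) :
    (ι ⊗ₘ j) ≫ (D.2.β m).hom = (β_ y x).inv ≫ (j ⊗ₘ ι) := by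
  rw [MonoidalCategory.tensorHom_def' ι j, Category.assoc, h, BraidedCategory.braiding_inv_naturality_right_assoc,
    MonoidalCategory.tensorHom_def j ι]

end CategoryTheory.Center

variable {k : Type*} [Field k]
variable {C : Type u} [Category.{v} C] [MonoidalCategory C] [BraidedCategory C]
  [Preadditive C] [CategoryTheory.Linear k C] [MonoidalPreadditive C] [MonoidalLinear k C]

theorem double_phi_antisymmetric_general
    {x xS : C} (coev : 𝟙_ C ⟶ x ⊗ xS)
    (Dx : CategoryTheory.Center C)
    (ι₁ : x ⟶ Dx.1) (ι₂ : xS ⟶ Dx.1)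
    -- the half-braiding of `Dx` acts on the summand `x` by the braiding of `C`
    (hβ₁ : ∀ m : C, (ι₁ ▷ m) ≫ (Dx.2.β m).hom = (β_ x m).hom ≫ (m ◁ ι₁))
    -- and on the summand `x^∗` by the inverse braiding
    (hβ₂ : ∀ m : C, (ι₂ ▷ m) ≫ (Dx.2.β m).hom = (β_ m xS).inv ≫ (m ◁ ι₂)) :
    (coev ≫ (ι₁ ⊗ₘ ι₂) - coev ≫ (β_ x xS).hom ≫ (ι₂ ⊗ₘ ι₁)) ≫ (Dx.2.β Dx.1).hom
      = -(coev ≫ (ι₁ ⊗ₘ ι₂) - coev ≫ (β_ x xS).hom ≫ (ι₂ ⊗ₘ ι₁)) := by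
  have h₁₂ := Center.tensorHom_comp_β_of_braiding ι₁ ι₂ (hβ₁ Dx.1)
  have h₂₁ := Center.tensorHom_comp_β_of_braiding_inv ι₂ ι₁ (hβ₂ Dx.1)
  rw [Preadditive.sub_comp, Category.assoc, h₁₂, Category.assoc, Category.assoc, h₂₁,
    Iso.hom_inv_id_assoc]
  abel

/-- Let `x` be an object of a braided category `C` with a right dual `xS = x^∗` (with evaluation
`ev`, coevaluation `coev` satisfying the triangle identities), and let `Dx ∈ Z(C)` be the double
of `x`: the biproduct `x ⊕ x̄^∗` (with inclusions `ι₁, ι₂` and projections `p₁, p₂`), whose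
half-braiding restricts on the summand `x` to the braiding of `C` and on the summand `x^∗` to
the inverse braiding.  Let `φ : 𝟙_C ⟶ Dx ⊗ Dx` be the morphism whose component into `x ⊗ x^∗`
is `coev`, whose component into `x^∗ ⊗ x` is `−c_{x,x^∗} ∘ coev`, and whose components into
`x ⊗ x` and `x^∗ ⊗ x^∗` vanish, i.e.
`φ = coev ≫ (ι₁ ⊗ₘ ι₂) − coev ≫ c_{x,x^∗} ≫ (ι₂ ⊗ₘ ι₁)`.
Then `φ ≫ c_{Dx}(Dx) = −φ`. -/
theorem double_phi_antisymmetric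
    {x xS : C} (ev : xS ⊗ x ⟶ 𝟙_ C) (coev : 𝟙_ C ⟶ x ⊗ xS)
    (zig : (coev ▷ x) ≫ (α_ x xS x).hom ≫ (x ◁ ev) = (λ_ x).hom ≫ (ρ_ x).inv)
    (zag : (xS ◁ coev) ≫ (α_ xS x xS).inv ≫ (ev ▷ xS) = (ρ_ xS).hom ≫ (λ_ xS).inv)
    (Dx : CategoryTheory.Center C)
    (ι₁ : x ⟶ Dx.1) (ι₂ : xS ⟶ Dx.1) (p₁ : Dx.1 ⟶ x) (p₂ : Dx.1 ⟶ xS)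
    (hι₁p₁ : ι₁ ≫ p₁ = 𝟙 x) (hι₂p₂ : ι₂ ≫ p₂ = 𝟙 xS)
    (hι₁p₂ : ι₁ ≫ p₂ = 0) (hι₂p₁ : ι₂ ≫ p₁ = 0)
    (htotal : p₁ ≫ ι₁ + p₂ ≫ ι₂ = 𝟙 Dx.1)
    -- the half-braiding of `Dx` acts on the summand `x` by the braiding of `C`
    (hβ₁ : ∀ m : C, (ι₁ ▷ m) ≫ (Dx.2.β m).hom = (β_ x m).hom ≫ (m ◁ ι₁))
    -- and on the summand `x^∗` by the inverse braiding
    (hβ₂ : ∀ m : C, (ι₂ ▷ m) ≫ (Dx.2.β m).hom = (β_ m xS).inv ≫ (m ◁ ι₂)) :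
    (coev ≫ (ι₁ ⊗ₘ ι₂) - coev ≫ (β_ x xS).hom ≫ (ι₂ ⊗ₘ ι₁)) ≫ (Dx.2.β Dx.1).hom
      = -(coev ≫ (ι₁ ⊗ₘ ι₂) - coev ≫ (β_ x xS).hom ≫ (ι₂ ⊗ₘ ι₁)) :=
  double_phi_antisymmetric_general coev Dx ι₁ ι₂ hβ₁ hβ₂
end

section
/- Let k be an algebraically closed field and A an associative unital k-algebra (not necessarily finite-dimensional). Suppose the abelian category mod(A) of A-modules that are finite-dimensional over k admits the structure of a rigid monoidal category (a k-linear monoidal structure in which every object has a left and a right dual). Then an object of mod(A) is projective if and only if it is injective. -/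
/-!
In a rigid monoidal category taking adjoint mates is a contravariant bijection on morphisms (the
right mate of the left mate of `f` is `f`), so it exchanges monomorphisms and epimorphisms and
hence sends projectives `P` to injectives `Pᘁ` and injectives `I` to projectives `ᘁI`. Tensoring
with any object has adjoints on both sides, so it preserves projectives and injectives. Finally
the zigzag identities make `M` a retract of `(M ⊗ Mᘁ) ⊗ M` and of `M ⊗ (ᘁM ⊗ M)`.
-/

open CategoryTheory

universe u

/-- The category `mod(A)` of left `A`-modules whose underlying `k`-vector space is
finite-dimensional, for a `k`-algebra `A`. -/
abbrev FinMod (k A : Type u) [Field k] [Ring A] [Algebra k A] : Type (u + 1) :=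
  CategoryTheory.ObjectProperty.FullSubcategory
    (fun M : ModuleCat.{u} A => Module.Finite k (RestrictScalars k A M))

namespace CategoryTheory

open MonoidalCategory

variable {C : Type*} [Category C] [MonoidalCategory C]

theorem rightAdjointMate_leftAdjointMate {X Y : C} [HasLeftDual X] [HasLeftDual Y] (f : X ⟶ Y) :
    (ᘁf)ᘁ = f := by
  simpa using congrArg (tensorLeftHomEquiv (𝟙_ C) (ᘁX) X Y).symm
    ((coevaluation_comp_rightAdjointMate (ᘁf)).trans (coevaluation_comp_leftAdjointMate f))

theorem leftAdjointMate_rightAdjointMate {X Y : C} [HasRightDual X] [HasRightDual Y]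
    (f : X ⟶ Y) : (ᘁ(fᘁ)) = f := by
  simpa using congrArg (tensorRightHomEquiv (𝟙_ C) X (Xᘁ) Y).symm
    ((coevaluation_comp_leftAdjointMate (fᘁ)).trans (coevaluation_comp_rightAdjointMate f))

def ExactPairing.retractLeft (X Y : C) [ExactPairing X Y] : Retract X ((X ⊗ Y) ⊗ X) where
  i := (λ_ X).inv ≫ η_ X Y ▷ X
  r := (α_ X Y X).hom ≫ X ◁ ε_ X Y ≫ (ρ_ X).hom
  retract := by simp [evaluation_coevaluation_assoc]

def ExactPairing.retractRight (X Y : C) [ExactPairing X Y] : Retract Y (Y ⊗ (X ⊗ Y)) where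
  i := (ρ_ Y).inv ≫ Y ◁ η_ X Y
  r := (α_ Y X Y).inv ≫ ε_ X Y ▷ Y ≫ (λ_ Y).hom
  retract := by simp [coevaluation_evaluation_assoc]

variable [RigidCategory C]

theorem epi_leftAdjointMate {X Y : C} (m : X ⟶ Y) [Mono m] : Epi (ᘁm) where
  left_cancellation u v h := by
    have h' := congrArg rightAdjointMate h
    rw [comp_rightAdjointMate, comp_rightAdjointMate, rightAdjointMate_leftAdjointMate,
      cancel_mono] at h'
    simpa only [leftAdjointMate_rightAdjointMate] using congrArg leftAdjointMate h'

theorem mono_rightAdjointMate {X Y : C} (e : X ⟶ Y) [Epi e] : Mono (eᘁ) where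
  right_cancellation u v h := by
    have h' := congrArg leftAdjointMate h
    rw [comp_leftAdjointMate, comp_leftAdjointMate, leftAdjointMate_rightAdjointMate,
      cancel_epi] at h'
    simpa only [rightAdjointMate_leftAdjointMate] using congrArg rightAdjointMate h'

theorem Projective.injective_rightDual {P : C} (hP : Projective P) : Injective (Pᘁ) where
  factors g f _ := by
    have := epi_leftAdjointMate f
    obtain ⟨t, ht⟩ := hP.factors (ᘁg) (ᘁf)
    refine ⟨tᘁ, ?_⟩
    simpa only [comp_rightAdjointMate, rightAdjointMate_leftAdjointMate]
      using congrArg rightAdjointMate ht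

theorem Injective.projective_leftDual {I : C} (hI : Injective I) : Projective (ᘁI) where
  factors f e _ := by
    have := mono_rightAdjointMate e
    obtain ⟨t, ht⟩ := hI.factors (fᘁ) (eᘁ)
    refine ⟨ᘁt, ?_⟩
    simpa only [comp_leftAdjointMate, leftAdjointMate_rightAdjointMate]
      using congrArg leftAdjointMate ht

instance (X : C) : (tensorLeft X).IsLeftAdjoint := (tensorLeftAdjunction (ᘁX) X).isLeftAdjoint

instance (X : C) : (tensorLeft X).IsRightAdjoint := (tensorLeftAdjunction X (Xᘁ)).isRightAdjoint

instance (X : C) : (tensorRight X).IsLeftAdjoint := (tensorRightAdjunction X (Xᘁ)).isLeftAdjoint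

instance (X : C) : (tensorRight X).IsRightAdjoint :=
  (tensorRightAdjunction (ᘁX) X).isRightAdjoint

theorem Injective.tensor_left (X : C) {J : C} (hJ : Injective J) : Injective (X ⊗ J) :=
  (tensorLeftAdjunction X (Xᘁ)).map_injective J hJ

theorem Injective.tensor_right (X : C) {J : C} (hJ : Injective J) : Injective (J ⊗ X) :=
  (tensorRightAdjunction (ᘁX) X).map_injective J hJ

theorem Projective.tensor_left (X : C) {P : C} (hP : Projective P) : Projective (X ⊗ P) :=
  (tensorLeftAdjunction (ᘁX) X).map_projective P hP

theorem Projective.tensor_right (X : C) {P : C} (hP : Projective P) : Projective (P ⊗ X) :=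
  (tensorRightAdjunction X (Xᘁ)).map_projective P hP

theorem RigidCategory.projective_iff_injective (M : C) : Projective M ↔ Injective M := by
  constructor
  · intro hM
    have := (hM.injective_rightDual.tensor_left M).tensor_right M
    exact (ExactPairing.retractLeft M (Mᘁ)).injective
  · intro hM
    have := (hM.projective_leftDual.tensor_right M).tensor_left M
    exact (ExactPairing.retractRight (ᘁM) M).projective

end CategoryTheory

theorem projective_iff_injective_of_rigid_general
    (k A : Type u) [Field k] [Ring A] [Algebra k A]
    [MonoidalCategory (FinMod k A)]
    [RigidCategory (FinMod k A)]
    (M : FinMod k A) :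
    Projective M ↔ Injective M :=
  RigidCategory.projective_iff_injective M

/-- If the abelian category `mod(A)` of finite-dimensional modules over a `k`-algebra `A`
(`k` algebraically closed) admits a rigid `k`-linear monoidal structure, then an object of
`mod(A)` is projective if and only if it is injective. -/
theorem projective_iff_injective_of_rigid
    (k A : Type u) [Field k] [IsAlgClosed k] [Ring A] [Algebra k A]
    [MonoidalCategory (FinMod k A)]
    [MonoidalPreadditive (FinMod k A)]
    [MonoidalLinear k (FinMod k A)]
    [RigidCategory (FinMod k A)]
    (M : FinMod k A) :
    Projective M ↔ Injective M :=
  projective_iff_injective_of_rigid_general k A M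
end

section
/- Let V, W, X be finite-dimensional complex vector spaces and f ∈ End(V), g ∈ End(W), h ∈ End(X). Define φ_{f,g} = exp(−(1/2) f² ⊗ g) ∈ End(V ⊗ W), and analogously φ_{g,h} ∈ End(W ⊗ X), φ_{f, g ⊞ h} = exp(−(1/2) f² ⊗ (g ⊞ h)) and φ_{f ⊞ g, h} = exp(−(1/2) (f ⊞ g)² ⊗ h) in End(V ⊗ W ⊗ X). Then (1_V ⊗ φ_{g,h}) ∘ φ_{f, g ⊞ h} ∘ φ_{f ⊞ g, h}^{−1} ∘ (φ_{f,g}^{−1} ⊗ 1_X) = exp(f ⊗ g ⊗ h) in End(V ⊗ W ⊗ X). -/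
/-!
Put `F = f ⊗ 1 ⊗ 1`, `G = 1 ⊗ g ⊗ 1`, `H = 1 ⊗ 1 ⊗ h`. These commute pairwise, and each of the
four factors is the exponential of a polynomial in them: `-½ G²H`, `-½ F²(G + H)`, `-½ (F + G)²H`
and `-½ F²G`. Exponentials of commuting matrices multiply by adding exponents, and
`-½ G²H - ½ F²(G + H) + ½ (F + G)²H + ½ F²G = FGH`.
-/

open Matrix Kronecker

variable {m n p : Type*} [Fintype m] [Fintype n] [Fintype p]
  [DecidableEq m] [DecidableEq n] [DecidableEq p]

open NormedSpace

theorem Continuous.matrix_kronecker {X R l m n p : Type*} [TopologicalSpace X]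
    [TopologicalSpace R] [Mul R] [ContinuousMul R]
    {A : X → Matrix l m R} {B : X → Matrix n p R} (hA : Continuous A) (hB : Continuous B) :
    Continuous fun x => A x ⊗ₖ B x :=
  continuous_matrix fun i j => (hA.matrix_elem i.1 j.1).mul (hB.matrix_elem i.2 j.2)

theorem Commute.kronecker {R a b : Type*} [CommSemiring R] [Fintype a] [Fintype b]
    {A A' : Matrix a a R} {B B' : Matrix b b R} (hA : Commute A A') (hB : Commute B B') :
    Commute (A ⊗ₖ B) (A' ⊗ₖ B') := by
  simp only [Commute, SemiconjBy, ← mul_kronecker_mul, hA.eq, hB.eq]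

namespace Matrix

section KroneckerRingHom

variable (R a b : Type*) [CommSemiring R] [Fintype a] [Fintype b] [DecidableEq a] [DecidableEq b]

def oneKroneckerRingHom : Matrix b b R →+* Matrix (a × b) (a × b) R where
  toFun B := (1 : Matrix a a R) ⊗ₖ B
  map_one' := one_kronecker_one
  map_mul' A B := by rw [← mul_kronecker_mul, one_mul]
  map_zero' := kronecker_zero _
  map_add' := kronecker_add _

def kroneckerOneRingHom : Matrix a a R →+* Matrix (a × b) (a × b) R where
  toFun A := A ⊗ₖ (1 : Matrix b b R)
  map_one' := one_kronecker_one
  map_mul' A B := by rw [← mul_kronecker_mul, one_mul]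
  map_zero' := zero_kronecker _
  map_add' A B := add_kronecker A B _

end KroneckerRingHom

section ExpMap

variable {𝔸 : Type*} [NormedCommRing 𝔸] [NormedAlgebra ℚ 𝔸] [CompleteSpace 𝔸]
  {a b : Type*} [Fintype a] [Fintype b] [DecidableEq a] [DecidableEq b]

theorem map_exp_of_continuous {F : Type*} [FunLike F (Matrix a a 𝔸) (Matrix b b 𝔸)]
    [RingHomClass F (Matrix a a 𝔸) (Matrix b b 𝔸)] (φ : F) (hφ : Continuous φ)
    (A : Matrix a a 𝔸) : φ (exp A) = exp (φ A) := by
  -- under the operator norm, `Matrix` is complete only up to unfolding to the product uniformity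
  open scoped Norms.Operator in
  have : @CompleteSpace (Matrix a a 𝔸) PseudoMetricSpace.toUniformSpace :=
    (inferInstance : CompleteSpace (a → a → 𝔸))
  open scoped Norms.Operator in exact map_exp φ hφ A

theorem one_kronecker_exp (B : Matrix b b 𝔸) :
    (1 : Matrix a a 𝔸) ⊗ₖ exp B = exp ((1 : Matrix a a 𝔸) ⊗ₖ B) :=
  map_exp_of_continuous (oneKroneckerRingHom 𝔸 a b)
    (continuous_const.matrix_kronecker continuous_id) B

theorem exp_kronecker_one (A : Matrix a a 𝔸) :
    exp A ⊗ₖ (1 : Matrix b b 𝔸) = exp (A ⊗ₖ (1 : Matrix b b 𝔸)) :=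
  map_exp_of_continuous (kroneckerOneRingHom 𝔸 a b)
    (continuous_id.matrix_kronecker continuous_const) A

theorem reindex_exp (e : a ≃ b) (A : Matrix a a 𝔸) :
    reindex e e (exp A) = exp (reindex e e A) :=
  map_exp_of_continuous (reindexRingEquiv 𝔸 e) (continuous_id.matrix_reindex e e) A

end ExpMap

theorem exp_coboundary_of_commute {𝕜 a : Type*} [RCLike 𝕜] [Fintype a] [DecidableEq a]
    {F G H : Matrix a a 𝕜} (hFG : Commute F G) (hFH : Commute F H) (hGH : Commute G H) :
    exp (-(1/2 : 𝕜) • (G * G * H)) * exp (-(1/2 : 𝕜) • (F * F * (G + H)))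
      * (exp (-(1/2 : 𝕜) • ((F + G) * (F + G) * H)))⁻¹ * (exp (-(1/2 : 𝕜) • (F * F * G)))⁻¹
    = exp (F * G * H) := by
  set S := Algebra.adjoin 𝕜 {F, G, H}
  have : IsMulCommutative S := Algebra.isMulCommutative_adjoin 𝕜 (by
    simp only [Set.mem_insert_iff, Set.mem_singleton_iff]
    rintro x (rfl | rfl | rfl) y (rfl | rfl | rfl) <;> simp [hFG.eq, hFH.eq, hGH.eq])
  have hF : F ∈ S := Algebra.subset_adjoin (by simp)
  have hG : G ∈ S := Algebra.subset_adjoin (by simp)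
  have hH : H ∈ S := Algebra.subset_adjoin (by simp)
  rw [← Matrix.exp_neg, ← Matrix.exp_neg, ← exp_add_of_commute, ← exp_add_of_commute,
    ← exp_add_of_commute]
  · congr 1
    simp only [mul_add, add_mul, ← hFG.eq]
    module
  all_goals refine setLike_mul_comm (s := S) ?_ ?_ <;>
    repeat' first
      | assumption | apply add_mem | apply mul_mem | apply neg_mem | apply Subalgebra.smul_mem

end Matrix

theorem exp_associator_coboundary
    (f : Matrix m m ℂ) (g : Matrix n n ℂ) (h : Matrix p p ℂ) :
    -- (1_V ⊗ φ_{g,h}) ∘ φ_{f, g ⊞ h} ∘ (φ_{f ⊞ g, h})⁻¹ ∘ (φ_{f,g}⁻¹ ⊗ 1_X)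
    ((1 : Matrix m m ℂ) ⊗ₖ NormedSpace.exp ((-(1/2 : ℂ)) • ((g * g) ⊗ₖ h)))
      * NormedSpace.exp
          ((-(1/2 : ℂ)) • ((f * f) ⊗ₖ (g ⊗ₖ (1 : Matrix p p ℂ) + (1 : Matrix n n ℂ) ⊗ₖ h)))
      * (Matrix.reindex (Equiv.prodAssoc m n p) (Equiv.prodAssoc m n p)
          (NormedSpace.exp ((-(1/2 : ℂ)) •
            (((f ⊗ₖ (1 : Matrix n n ℂ) + (1 : Matrix m m ℂ) ⊗ₖ g)
              * (f ⊗ₖ (1 : Matrix n n ℂ) + (1 : Matrix m m ℂ) ⊗ₖ g)) ⊗ₖ h))))⁻¹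
      * Matrix.reindex (Equiv.prodAssoc m n p) (Equiv.prodAssoc m n p)
          ((NormedSpace.exp ((-(1/2 : ℂ)) • ((f * f) ⊗ₖ g)))⁻¹ ⊗ₖ (1 : Matrix p p ℂ))
    = NormedSpace.exp (f ⊗ₖ (g ⊗ₖ h)) := by
  set F := f ⊗ₖ ((1 : Matrix n n ℂ) ⊗ₖ (1 : Matrix p p ℂ))
  set G := (1 : Matrix m m ℂ) ⊗ₖ (g ⊗ₖ (1 : Matrix p p ℂ))
  set H := (1 : Matrix m m ℂ) ⊗ₖ ((1 : Matrix n n ℂ) ⊗ₖ h)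
  have hFG : Commute F G :=
    (Commute.one_right f).kronecker ((Commute.one_left g).kronecker (Commute.refl 1))
  have hFH : Commute F H :=
    (Commute.one_right f).kronecker ((Commute.refl 1).kronecker (Commute.one_left h))
  have hGH : Commute G H :=
    (Commute.refl 1).kronecker ((Commute.one_right g).kronecker (Commute.one_left h))
  have key := exp_coboundary_of_commute hFG hFH hGH
  rw [← Matrix.exp_neg (_ • (F * F * G))] at key
  rw [one_kronecker_exp, reindex_exp, ← Matrix.exp_neg (_ • ((f * f) ⊗ₖ g)), exp_kronecker_one,
    reindex_exp]
  convert key using 5 <;>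
    simp only [F, G, H, reindex_apply, mul_add, add_mul, ← neg_smul, ← mul_kronecker_mul,
      kronecker_add, add_kronecker, kronecker_smul, smul_kronecker, submatrix_add, submatrix_smul,
      Pi.add_apply, Pi.smul_apply, kronecker_assoc', one_mul, mul_one]
end

section
/- Let k be an algebraically closed field and I a finite type. Let M denote the category of I-graded finite-dimensional k-vector spaces, i.e. families (V_i)_{i ∈ I} of finite-dimensional k-vector spaces with componentwise linear maps, and for i ∈ I let x_i ∈ M be the simple object with value k in degree i and 0 elsewhere. Then there is an equivalence of categories Quiv_I ≃ (End_k(M))^{op}, where End_k(M) is the category of k-linear functors M → M and natural transformations; it sends a k-linear endofunctor R to the quiver Q(R) with Q(R)(i, j) = Hom_M(R(x_i), x_j)^∗ and, in the other direction, a quiver Q to the endofunctor R(Q) with R(Q)(x_i) = ⊕_{j ∈ I} Q(i, j) ⊗_k x_j. -/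
open CategoryTheory

universe u

variable (k : Type u) [Field k] (I : Type u) [Fintype I] [DecidableEq I]

/-- The category `M` of `I`-graded finite-dimensional `k`-vector spaces. -/
abbrev GradedVect := ∀ _ : I, FGModuleCat.{u} k

instance : Preadditive (GradedVect k I) where
  homGroup X Y := inferInstanceAs (AddCommGroup (∀ i, X i ⟶ Y i))
  add_comp P Q R f f' g := by funext i; exact Preadditive.add_comp _ _ _ (f i) (f' i) (g i)
  comp_add P Q R f g g' := by funext i; exact Preadditive.comp_add _ _ _ (f i) (g i) (g' i)

instance : CategoryTheory.Linear k (GradedVect k I) where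
  homModule X Y := inferInstanceAs (Module k (∀ i, X i ⟶ Y i))
  smul_comp P Q R r f g := by funext i; exact CategoryTheory.Linear.smul_comp _ _ _ r (f i) (g i)
  comp_smul P Q R f r g := by funext i; exact CategoryTheory.Linear.comp_smul _ _ _ (f i) r (g i)

instance (X Y : GradedVect k I) : Module.Finite k (X ⟶ Y) :=
  inferInstanceAs (Module.Finite k (∀ i, X i ⟶ Y i))

/-- The category `Quiv_I` of linear quivers on the vertex set `I`: objects are families
`Q(i,j)` of finite-dimensional `k`-vector spaces (the arrow spaces); a morphism `Q ⟶ P` is a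
family of linear maps `P(i,j) → Q(i,j)`. -/
def QuivCat := I → I → FGModuleCat.{u} k

instance : Category (QuivCat k I) where
  Hom Q P := ∀ i j : I, P i j ⟶ Q i j
  id Q := fun _ _ => 𝟙 _
  comp f g := fun i j => g i j ≫ f i j
  id_comp f := by funext i j; exact Category.comp_id (f i j)
  comp_id f := by funext i j; exact Category.id_comp (f i j)
  assoc f g h := by funext i j; exact (Category.assoc (h i j) (g i j) (f i j)).symm

/-- The category of `k`-linear endofunctors of `M`. -/
def EndCat := ObjectProperty.FullSubcategory
  (fun F : GradedVect k I ⥤ GradedVect k I =>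
    F.Additive ∧ ∀ {X Y : GradedVect k I} (r : k) (f : X ⟶ Y), F.map (r • f) = r • F.map f)

instance : Category (EndCat k I) :=
  inferInstanceAs (Category (ObjectProperty.FullSubcategory _))

/-- The simple object `x_i` of `M`: the `I`-graded vector space with value `k` in degree `i`
and `0` elsewhere. -/
noncomputable def simpleAt (i : I) : GradedVect k I :=
  fun j => if j = i then FGModuleCat.of k k else FGModuleCat.of k PUnit

/-- The quiver `Q(R)` of a linear endofunctor `R` of `M`, with arrow spaces
`Q(R)(i,j) = Hom_M(R(x_i), x_j)^∗`. -/
noncomputable def quiverOf (R : EndCat k I) : QuivCat k I :=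
  fun i j => FGModuleCat.of k
    (Module.Dual k (R.obj.obj (simpleAt k I i) ⟶ simpleAt k I j))

instance (M : I → Type u) [∀ i, AddCommGroup (M i)] [∀ i, Module k (M i)]
    [∀ i, Module.Finite k (M i)] : Module.Finite k (DirectSum I M) :=
  Module.Finite.equiv (DirectSum.linearEquivFunOnFintype k I M).symm

/-- The value `R(Q)(x_i) = ⊕_{j} Q(i,j) ⊗_k x_j` of the endofunctor associated to a quiver
`Q` on the simple object `x_i`; its component in degree `j'` is `⨁_j Q(i,j) ⊗ (x_j)_{j'}`. -/
noncomputable def endofunctorValueAt (Q : QuivCat k I) (i : I) : GradedVect k I :=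
  fun j' => FGModuleCat.of k
    (DirectSum I (fun j : I => TensorProduct k (Q i j) ((simpleAt k I j) j')))

/-!
Every `X ∈ M` is a direct sum of simple objects: a basis of each `X i` splits `𝟙 X` as a sum
of composites `X → x_i → X`. Hence a `k`-linear endofunctor `R` is determined by the spaces
`R(x_i)_j`: the maps `v ⊗ w ↦ R(v̂)_j w`, where `v̂ : x_i → X` picks out `v ∈ X i`, assemble to
an isomorphism `⨁_i X i ⊗ R(x_i)_j ≅ R(X)_j`, natural in `X` and `R`. Conversely a quiver `Q`
defines the endofunctor `X ↦ (⨁_i X i ⊗ Q(i,j))_j`, whose value on `x_i` is `Q(i,-)`. So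
`Q ↦ R(Q)` and `R ↦ (R(x_i)_j)_{i,j}` are mutually inverse, and `R(x_i)_j ≅ Hom(R(x_i), x_j)^∗`
because `Hom(Y, x_j) ≅ (Y_j)^∗` is finite-dimensional.
-/

noncomputable section

open CategoryTheory TensorProduct DirectSum

section Subsingleton

variable {R ι : Type*} [Semiring R] [DecidableEq ι] {M : ι → Type*}
  [∀ i, AddCommMonoid (M i)] [∀ i, Module R (M i)]

def LinearEquiv.piEvalOfSubsingleton (i : ι) (h : ∀ j ≠ i, Subsingleton (M j)) :
    (∀ j, M j) ≃ₗ[R] M i where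
  toLinearMap := LinearMap.proj i
  invFun := Pi.single i
  left_inv f := by
    ext j
    obtain rfl | hj := eq_or_ne j i
    · exact Pi.single_eq_same _ _
    · exact (h j hj).elim _ _
  right_inv := Pi.single_eq_same i

def DirectSum.componentEquivOfSubsingleton (i : ι) (h : ∀ j ≠ i, Subsingleton (M j)) :
    (⨁ j, M j) ≃ₗ[R] M i where
  toLinearMap := component R ι M i
  invFun := lof R ι M i
  left_inv f := by
    refine ext_component R fun j => ?_
    obtain rfl | hj := eq_or_ne j i
    · exact component.lof_self _ _ _
    · exact (h j hj).elim _ _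
  right_inv := component.lof_self R i

lemma DirectSum.componentEquivOfSubsingleton_lof_self (i : ι) (h : ∀ j ≠ i, Subsingleton (M j))
    (x : M i) : componentEquivOfSubsingleton (R := R) i h (lof R ι M i x) = x :=
  component.lof_self R i x

lemma DirectSum.componentEquivOfSubsingleton_lof_of_ne (i : ι)
    (h : ∀ j ≠ i, Subsingleton (M j)) {j : ι} (hj : j ≠ i) (x : M j) :
    componentEquivOfSubsingleton (R := R) i h (lof R ι M j x) = 0 :=
  (component.of _ _ _ _).trans (dif_neg hj)

end Subsingleton

namespace FGModuleCat

variable {k : Type u} [Field k] {A B : FGModuleCat.{u} k}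

def homLinearEquiv : (A ⟶ B) ≃ₗ[k] (A →ₗ[k] B) :=
  InducedCategory.homLinearEquiv.trans ModuleCat.homLinearEquiv

lemma hom_sum_apply {ι : Type*} (s : Finset ι) (f : ι → (A ⟶ B)) (x : A) :
    (∑ a ∈ s, f a) x = ∑ a ∈ s, f a x :=
  congr($(map_sum homLinearEquiv f s) x).trans (LinearMap.sum_apply _ _ _)

lemma subsingleton_hom_of_subsingleton_left [Subsingleton A] : Subsingleton (A ⟶ B) :=
  ⟨fun f g => by ext x; rw [Subsingleton.elim x 0, map_zero, map_zero]⟩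

lemma subsingleton_hom_of_subsingleton_right [Subsingleton B] : Subsingleton (A ⟶ B) :=
  ⟨fun f g => by ext x; exact Subsingleton.elim _ _⟩

end FGModuleCat

lemma GradedVect.hom_sum_apply {k : Type u} [Field k] {I : Type u} {X Y : GradedVect k I}
    {ι : Type*} (s : Finset ι) (f : ι → (X ⟶ Y)) (j : I) (x : X j) :
    (∑ a ∈ s, f a) j x = ∑ a ∈ s, f a j x := by
  rw [Finset.sum_apply, FGModuleCat.hom_sum_apply]

section Development

variable {k : Type u} [Field k] {I : Type u} [DecidableEq I]

lemma simpleAt_self (i : I) : simpleAt k I i i = FGModuleCat.of k k := by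
  simp [simpleAt]

lemma subsingleton_simpleAt {i j : I} (h : j ≠ i) : Subsingleton (simpleAt k I i j) := by
  rw [simpleAt, if_neg h]
  exact inferInstanceAs (Subsingleton PUnit)

def simpleAtSelfEquiv (i : I) : simpleAt k I i i ≃ₗ[k] k :=
  FGModuleCat.isoToLinearEquiv (eqToIso (simpleAt_self i))

namespace GradedVect

variable (X : GradedVect k I) (i : I)

def homFromSimple : (simpleAt k I i ⟶ X) ≃ₗ[k] X i :=
  (LinearEquiv.piEvalOfSubsingleton i fun _ hj =>
      have := subsingleton_simpleAt (k := k) hj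
      FGModuleCat.subsingleton_hom_of_subsingleton_left).trans <|
    FGModuleCat.homLinearEquiv.trans <|
      ((simpleAtSelfEquiv i).arrowCongr (LinearEquiv.refl k (X i))).trans
        (LinearMap.ringLmapEquivSelf k k (X i))

def homToSimple : (X ⟶ simpleAt k I i) ≃ₗ[k] Module.Dual k (X i) :=
  (LinearEquiv.piEvalOfSubsingleton i fun _ hj =>
      have := subsingleton_simpleAt (k := k) hj
      FGModuleCat.subsingleton_hom_of_subsingleton_right).trans <|
    FGModuleCat.homLinearEquiv.trans (LinearEquiv.congrRight (simpleAtSelfEquiv i))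

variable {X i}

lemma homFromSimple_apply (f : simpleAt k I i ⟶ X) :
    homFromSimple X i f = f i ((simpleAtSelfEquiv i).symm 1) := rfl

lemma homToSimple_apply (f : X ⟶ simpleAt k I i) (x : X i) :
    homToSimple X i f x = simpleAtSelfEquiv i (f i x) := rfl

lemma homFromSimple_comp {Y : GradedVect k I} (f : simpleAt k I i ⟶ X) (g : X ⟶ Y) :
    homFromSimple Y i (f ≫ g) = g i (homFromSimple X i f) := rfl

lemma homFromSimple_symm_comp {Y : GradedVect k I} (v : X i) (g : X ⟶ Y) :
    (homFromSimple X i).symm v ≫ g = (homFromSimple Y i).symm (g i v) :=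
  (homFromSimple Y i).injective <| by
    rw [homFromSimple_comp, LinearEquiv.apply_symm_apply, LinearEquiv.apply_symm_apply]

lemma homToSimple_symm_app_self (φ : Module.Dual k (X i)) (x : X i) :
    (homToSimple X i).symm φ i x = φ x • (simpleAtSelfEquiv i).symm 1 := by
  rw [← map_smul, smul_eq_mul, mul_one, LinearEquiv.eq_symm_apply, ← homToSimple_apply,
    LinearEquiv.apply_symm_apply]

lemma homFromSimple_symm_comp_homToSimple_symm (v : X i) (φ : Module.Dual k (X i)) :
    (homFromSimple X i).symm v ≫ (homToSimple X i).symm φ = φ v • 𝟙 (simpleAt k I i) :=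
  (homFromSimple _ i).injective <| by
    rw [homFromSimple_comp, LinearEquiv.apply_symm_apply, map_smul, homToSimple_symm_app_self]
    rfl

lemma subsingleton_hom_simpleAt {i' : I} (h : i ≠ i') :
    Subsingleton (simpleAt k I i ⟶ simpleAt k I i') :=
  have := subsingleton_simpleAt (k := k) h
  (homFromSimple (simpleAt k I i') i).toEquiv.subsingleton

lemma homToSimple_symm_comp_homFromSimple_symm_app_self (φ : Module.Dual k (X i))
    (v x : X i) : ((homToSimple X i).symm φ ≫ (homFromSimple X i).symm v) i x = φ x • v := by
  change (homFromSimple X i).symm v i ((homToSimple X i).symm φ i x) = _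
  rw [homToSimple_symm_app_self, map_smul, ← homFromSimple_apply, LinearEquiv.apply_symm_apply]

lemma homToSimple_symm_comp_homFromSimple_symm_app_of_ne {j : I} (h : j ≠ i)
    (φ : Module.Dual k (X i)) (v : X i) :
    ((homToSimple X i).symm φ ≫ (homFromSimple X i).symm v) j = 0 := by
  have := subsingleton_simpleAt (k := k) h
  ext x
  change (homFromSimple X i).symm v j ((homToSimple X i).symm φ j x) = 0
  rw [Subsingleton.elim ((homToSimple X i).symm φ j x) 0, map_zero]

variable (X) in
lemma sum_homToSimple_symm_comp_homFromSimple_symm [Fintype I] :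
    ∑ i, ∑ s, (homToSimple X i).symm ((Module.finBasis k (X i)).coord s) ≫
      (homFromSimple X i).symm (Module.finBasis k (X i) s) = 𝟙 X := by
  funext j
  refine ConcreteCategory.hom_ext _ _ fun x => ?_
  rw [hom_sum_apply, Finset.sum_eq_single j]
  · rw [hom_sum_apply]
    simp only [homToSimple_symm_comp_homFromSimple_symm_app_self, Module.Basis.coord_apply]
    exact (Module.finBasis k (X j)).sum_repr x
  · intro i _ hij
    rw [hom_sum_apply]
    refine Finset.sum_eq_zero fun s _ => ?_
    rw [homToSimple_symm_comp_homFromSimple_symm_app_of_ne hij.symm]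
    rfl
  · simp

end GradedVect

section SimpleTensor

variable (M : I → Type*) [∀ i, AddCommGroup (M i)] [∀ i, Module k (M i)]

def directSumSimpleAtTensorEquiv (i : I) : (⨁ i', simpleAt k I i i' ⊗[k] M i') ≃ₗ[k] M i :=
  (componentEquivOfSubsingleton i fun _ h =>
      have := subsingleton_simpleAt (k := k) h
      inferInstance).trans <|
    (TensorProduct.congr (simpleAtSelfEquiv i) (LinearEquiv.refl k _)).trans
      (TensorProduct.lid k _)

def directSumTensorSimpleAtEquiv (j : I) : (⨁ j', M j' ⊗[k] simpleAt k I j' j) ≃ₗ[k] M j :=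
  (componentEquivOfSubsingleton j fun _ h =>
      have := subsingleton_simpleAt (k := k) h.symm
      inferInstance).trans <|
    (TensorProduct.congr (LinearEquiv.refl k _) (simpleAtSelfEquiv j)).trans
      (TensorProduct.rid k _)

variable {M}

lemma directSumSimpleAtTensorEquiv_lof_self {i : I} (v : simpleAt k I i i) (m : M i) :
    directSumSimpleAtTensorEquiv M i (lof k I _ i (v ⊗ₜ m)) = simpleAtSelfEquiv i v • m := by
  rw [directSumSimpleAtTensorEquiv, LinearEquiv.trans_apply, LinearEquiv.trans_apply,
    componentEquivOfSubsingleton_lof_self, congr_tmul, lid_tmul]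
  rfl

lemma directSumSimpleAtTensorEquiv_lof_of_ne {i i' : I} (h : i' ≠ i) (v : simpleAt k I i i')
    (m : M i') : directSumSimpleAtTensorEquiv M i (lof k I _ i' (v ⊗ₜ m)) = 0 := by
  rw [directSumSimpleAtTensorEquiv, LinearEquiv.trans_apply,
    componentEquivOfSubsingleton_lof_of_ne _ _ h, map_zero]

end SimpleTensor

def QuivCat.isoMk {A B : QuivCat k I} (e : ∀ i j, A i j ≅ B i j) : A ≅ B where
  hom i j := (e i j).inv
  inv i j := (e i j).hom
  hom_inv_id := by funext i j; exact (e i j).hom_inv_id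
  inv_hom_id := by funext i j; exact (e i j).inv_hom_id

def simpleQuiver (F : GradedVect k I ⥤ GradedVect k I) : QuivCat k I :=
  fun i j => F.obj (simpleAt k I i) j

namespace EndCat

instance (R : EndCat k I) : R.obj.Additive := R.property.1

instance (R : EndCat k I) : R.obj.Linear k := ⟨fun f r => R.property.2 r f⟩

variable (k I) in
def toQuivFunctor : (EndCat k I)ᵒᵖ ⥤ QuivCat k I where
  obj R := simpleQuiver R.unop.obj
  map θ i j := θ.unop.hom.app (simpleAt k I i) j

end EndCat

namespace GradedVect

variable (F : GradedVect k I ⥤ GradedVect k I) (X : GradedVect k I) (j : I)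

def counitInvLinearMap [Fintype I] :
    F.obj X j →ₗ[k] (⨁ i, X i ⊗[k] F.obj (simpleAt k I i) j) :=
  ∑ i, ∑ s, lof k I _ i ∘ₗ TensorProduct.mk k _ _ (Module.finBasis k (X i) s) ∘ₗ
    FGModuleCat.homLinearEquiv
      (F.map ((homToSimple X i).symm ((Module.finBasis k (X i)).coord s)) j)

lemma counitInvLinearMap_apply [Fintype I] (y : F.obj X j) :
    counitInvLinearMap F X j y = ∑ i, ∑ s, lof k I _ i (Module.finBasis k (X i) s ⊗ₜ
      F.map ((homToSimple X i).symm ((Module.finBasis k (X i)).coord s)) j y) := by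
  simp only [counitInvLinearMap, LinearMap.coe_sum, LinearMap.coe_comp, Finset.sum_apply,
    Function.comp_apply, mk_apply]
  rfl

variable [F.Additive] [F.Linear k]

def counitLinearMap : (⨁ i, X i ⊗[k] F.obj (simpleAt k I i) j) →ₗ[k] F.obj X j :=
  toModule k I _ fun i => TensorProduct.lift <|
    FGModuleCat.homLinearEquiv.toLinearMap ∘ₗ
      (LinearMap.proj j : (F.obj (simpleAt k I i) ⟶ F.obj X) →ₗ[k] _) ∘ₗ
      F.mapLinearMap k ∘ₗ (homFromSimple X i).symm.toLinearMap

lemma counitLinearMap_lof {i : I} (v : X i) (w : F.obj (simpleAt k I i) j) :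
    counitLinearMap F X j (lof k I _ i (v ⊗ₜ w)) = F.map ((homFromSimple X i).symm v) j w := by
  rw [counitLinearMap, toModule_lof, lift.tmul]
  rfl

lemma counitLinearMap_counitInvLinearMap [Fintype I] (y : F.obj X j) :
    counitLinearMap F X j (counitInvLinearMap F X j y) = y := by
  rw [counitInvLinearMap_apply, map_sum]
  simp_rw [map_sum, counitLinearMap_lof]
  calc _ = F.map (∑ i, ∑ s, (homToSimple X i).symm ((Module.finBasis k (X i)).coord s) ≫
      (homFromSimple X i).symm (Module.finBasis k (X i) s)) j y := by
        simp only [F.map_sum, hom_sum_apply, F.map_comp]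
        rfl
    _ = y := by
        rw [sum_homToSimple_symm_comp_homFromSimple_symm, F.map_id]
        rfl

lemma counitInvLinearMap_counitLinearMap [Fintype I]
    (x : ⨁ i, X i ⊗[k] F.obj (simpleAt k I i) j) :
    counitInvLinearMap F X j (counitLinearMap F X j x) = x := by
  refine LinearMap.congr_fun (f := counitInvLinearMap F X j ∘ₗ counitLinearMap F X j)
    (g := LinearMap.id) ?_ x
  refine DirectSum.linearMap_ext k fun i' => TensorProduct.ext' fun v w => ?_
  change counitInvLinearMap F X j (counitLinearMap F X j (lof k I _ i' (v ⊗ₜ w))) =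
    lof k I _ i' (v ⊗ₜ w)
  have h_self (φ : Module.Dual k (X i')) :
      F.map ((homToSimple X i').symm φ) j (F.map ((homFromSimple X i').symm v) j w) =
        φ v • w := by
    change (F.map _ ≫ F.map _) j w = _
    rw [← F.map_comp, homFromSimple_symm_comp_homToSimple_symm, F.map_smul, F.map_id]
    rfl
  have h_ne {i : I} (h : i ≠ i') (φ : Module.Dual k (X i)) :
      F.map ((homToSimple X i).symm φ) j (F.map ((homFromSimple X i').symm v) j w) = 0 := by
    have := subsingleton_hom_simpleAt (k := k) h.symm
    change (F.map _ ≫ F.map _) j w = _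
    rw [← F.map_comp, Subsingleton.elim (_ ≫ _) 0, F.map_zero]
    rfl
  rw [counitLinearMap_lof, counitInvLinearMap_apply, Finset.sum_eq_single i']
  · simp_rw [h_self, ← smul_tmul, ← map_sum, ← sum_tmul, Module.Basis.coord_apply,
      Module.Basis.sum_repr]
  · intro i _ h
    simp_rw [h_ne h, tmul_zero, map_zero, Finset.sum_const_zero]
  · simp

def counitEquiv [Fintype I] : (⨁ i, X i ⊗[k] F.obj (simpleAt k I i) j) ≃ₗ[k] F.obj X j where
  __ := counitLinearMap F X j
  invFun := counitInvLinearMap F X j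
  left_inv := counitInvLinearMap_counitLinearMap F X j
  right_inv := counitLinearMap_counitInvLinearMap F X j

end GradedVect

variable [Fintype I]

namespace QuivCat

variable (Q : QuivCat k I)

def endoObj (X : GradedVect k I) : GradedVect k I :=
  fun j => FGModuleCat.of k (⨁ i, X i ⊗[k] Q i j)

variable {Q} in
lemma endoObj_hom_ext {X : GradedVect k I} {j : I} {A : FGModuleCat.{u} k}
    {f g : endoObj Q X j ⟶ A}
    (h : ∀ i (v : X i) (q : Q i j), f (lof k I _ i (v ⊗ₜ q)) = g (lof k I _ i (v ⊗ₜ q))) :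
    f = g :=
  FGModuleCat.homLinearEquiv.injective <|
    DirectSum.linearMap_ext k fun i => TensorProduct.ext' (h i)

variable {Q} in
def endoMap {X Y : GradedVect k I} (f : X ⟶ Y) : endoObj Q X ⟶ endoObj Q Y :=
  fun _ => FGModuleCat.ofHom (lmap fun i => TensorProduct.map (f i).hom.hom LinearMap.id)

lemma endoMap_lof {X Y : GradedVect k I} (f : X ⟶ Y) (j i : I) (v : X i) (q : Q i j) :
    endoMap f j (lof k I _ i (v ⊗ₜ q)) = lof k I _ i (f i v ⊗ₜ q) := by
  change lmap _ (lof k I _ i _) = _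
  rw [lmap_lof, TensorProduct.map_tmul]
  rfl

def endo : GradedVect k I ⥤ GradedVect k I where
  obj := endoObj Q
  map := endoMap
  map_id X := by
    funext j
    refine endoObj_hom_ext fun i v q => ?_
    rw [endoMap_lof]
    rfl
  map_comp f g := by
    funext j
    refine endoObj_hom_ext fun i v q => ?_
    change _ = endoMap g j (endoMap f j _)
    rw [endoMap_lof, endoMap_lof, endoMap_lof]
    rfl

def toEnd : EndCat k I where
  obj := endo Q
  property := by
    refine ⟨⟨fun {X Y f g} => ?_⟩, fun {X Y} r f => ?_⟩ <;> funext j <;>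
      refine endoObj_hom_ext fun i v q => ?_
    · change endoMap (f + g) j _ = endoMap f j _ + endoMap g j _
      rw [endoMap_lof, endoMap_lof, endoMap_lof]
      exact (congrArg _ (add_tmul (f i v) (g i v) q)).trans (map_add _ _ _)
    · change endoMap (r • f) j _ = r • endoMap f j _
      rw [endoMap_lof, endoMap_lof]
      exact (congrArg _ (smul_tmul' r (f i v) q).symm).trans (map_smul _ r _)

variable {Q} {P : QuivCat k I}

def endoMapOfHom (φ : Q ⟶ P) (X : GradedVect k I) : endoObj P X ⟶ endoObj Q X :=
  fun j => FGModuleCat.ofHom (lmap fun i => TensorProduct.map LinearMap.id (φ i j).hom.hom)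

lemma endoMapOfHom_lof (φ : Q ⟶ P) (X : GradedVect k I) (j i : I) (v : X i) (q : P i j) :
    endoMapOfHom φ X j (lof k I _ i (v ⊗ₜ q)) = lof k I _ i (v ⊗ₜ φ i j q) := by
  change lmap _ (lof k I _ i _) = _
  rw [lmap_lof, TensorProduct.map_tmul]
  rfl

def toEndMap (φ : Q ⟶ P) : toEnd P ⟶ toEnd Q :=
  ObjectProperty.homMk
    { app := endoMapOfHom φ
      naturality := fun X Y f => by
        funext j
        refine endoObj_hom_ext fun i v q => ?_
        change endoMapOfHom φ Y j (endoMap f j _) = endoMap f j (endoMapOfHom φ X j _)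
        rw [endoMap_lof, endoMapOfHom_lof, endoMapOfHom_lof, endoMap_lof] }

variable (k I) in
def toEndFunctor : QuivCat k I ⥤ (EndCat k I)ᵒᵖ where
  obj Q := .op (toEnd Q)
  map φ := (toEndMap φ).op
  map_id Q := by
    refine Quiver.Hom.unop_inj <| InducedCategory.hom_ext <| NatTrans.ext <| funext fun X => ?_
    funext j
    refine endoObj_hom_ext fun i v q => ?_
    change endoMapOfHom (𝟙 Q) X j _ = _
    rw [endoMapOfHom_lof]
    rfl
  map_comp φ ψ := by
    refine Quiver.Hom.unop_inj <| InducedCategory.hom_ext <| NatTrans.ext <| funext fun X => ?_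
    funext j
    refine endoObj_hom_ext fun i v q => ?_
    change endoMapOfHom (φ ≫ ψ) X j _ = endoMapOfHom φ X j (endoMapOfHom ψ X j _)
    rw [endoMapOfHom_lof, endoMapOfHom_lof, endoMapOfHom_lof]
    rfl

end QuivCat

namespace GradedVect

variable (F : GradedVect k I ⥤ GradedVect k I) [F.Additive] [F.Linear k]

def endoSimpleQuiverIso : QuivCat.endo (simpleQuiver F) ≅ F :=
  NatIso.ofComponents (fun X => Pi.isoMk fun j => (counitEquiv F X j).toFGModuleCatIso)
    fun {X Y} f => by
      funext j
      refine QuivCat.endoObj_hom_ext fun i v (w : F.obj (simpleAt k I i) j) => ?_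
      change counitLinearMap F Y j
          (QuivCat.endoMap (Q := simpleQuiver F) f j (lof k I _ i (v ⊗ₜ w))) =
        F.map f j (counitLinearMap F X j (lof k I _ i (v ⊗ₜ w)))
      refine (congrArg (counitLinearMap F Y j)
        (QuivCat.endoMap_lof (simpleQuiver F) f j i v w)).trans ?_
      refine (counitLinearMap_lof F Y j (f i v) w).trans ?_
      rw [counitLinearMap_lof, ← homFromSimple_symm_comp, F.map_comp]
      rfl

end GradedVect

def EndCat.toEndSimpleQuiverIso (R : EndCat k I) : QuivCat.toEnd (simpleQuiver R.obj) ≅ R :=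
  ObjectProperty.isoMk _ (GradedVect.endoSimpleQuiverIso R.obj)

def EndCat.simpleQuiverIsoQuiverOf (R : EndCat k I) : simpleQuiver R.obj ≅ quiverOf k I R :=
  QuivCat.isoMk fun _ j =>
    ((Module.evalEquiv k _).trans (GradedVect.homToSimple _ j).dualMap).toFGModuleCatIso

namespace QuivCat

def unitIso : 𝟭 (QuivCat k I) ≅ toEndFunctor k I ⋙ EndCat.toQuivFunctor k I :=
  NatIso.ofComponents
    (fun Q => isoMk fun i j =>
      (directSumSimpleAtTensorEquiv (k := k) (Q · j) i).toFGModuleCatIso.symm)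
    fun {Q P} φ => by
      funext i j
      refine endoObj_hom_ext fun i' v q => ?_
      change φ i j (directSumSimpleAtTensorEquiv (P · j) i _) =
        directSumSimpleAtTensorEquiv (Q · j) i (endoMapOfHom φ _ j _)
      rw [endoMapOfHom_lof]
      obtain rfl | h := eq_or_ne i' i
      · rw [directSumSimpleAtTensorEquiv_lof_self, directSumSimpleAtTensorEquiv_lof_self, map_smul]
      · rw [directSumSimpleAtTensorEquiv_lof_of_ne h, directSumSimpleAtTensorEquiv_lof_of_ne h,
          map_zero]

def counitIso : EndCat.toQuivFunctor k I ⋙ toEndFunctor k I ≅ 𝟭 _ :=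
  Iso.symm <| NatIso.ofComponents (fun R => (EndCat.toEndSimpleQuiverIso R.unop).op)
    fun {R R'} θ => by
      refine Quiver.Hom.unop_inj <| InducedCategory.hom_ext <| NatTrans.ext <| funext fun X => ?_
      funext j
      refine endoObj_hom_ext fun i v (w : R'.unop.obj.obj (simpleAt k I i) j) => ?_
      let F := R.unop.obj
      let F' := R'.unop.obj
      change θ.unop.hom.app X j (GradedVect.counitLinearMap F' X j (lof k I _ i (v ⊗ₜ w))) =
        GradedVect.counitLinearMap F X j (endoMapOfHom (Q := simpleQuiver F) (P := simpleQuiver F')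
          ((EndCat.toQuivFunctor k I).map θ) X j (lof k I _ i (v ⊗ₜ w)))
      refine Eq.trans ?_ (congrArg (GradedVect.counitLinearMap F X j)
        (endoMapOfHom_lof ((EndCat.toQuivFunctor k I).map θ) X j i v w)).symm
      rw [GradedVect.counitLinearMap_lof]
      refine Eq.trans ?_ (GradedVect.counitLinearMap_lof F X j v _).symm
      change (F'.map _ ≫ θ.unop.hom.app X) j w = (θ.unop.hom.app _ ≫ F.map _) j w
      rw [θ.unop.hom.naturality]

variable (k I) in
def equivEndCatOp : QuivCat k I ≌ (EndCat k I)ᵒᵖ :=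
  CategoryTheory.Equivalence.mk (toEndFunctor k I) (EndCat.toQuivFunctor k I) unitIso counitIso

def endoObjSimpleIso (Q : QuivCat k I) (i : I) :
    (endo Q).obj (simpleAt k I i) ≅ endofunctorValueAt k I Q i :=
  Pi.isoMk fun j => ((directSumSimpleAtTensorEquiv (k := k) (Q · j) i).trans
    (directSumTensorSimpleAtEquiv (k := k) (Q i ·) j).symm).toFGModuleCatIso

end QuivCat

end Development

theorem quivCat_equivalence_endofunctors :
    ∃ E : QuivCat k I ≌ (EndCat k I)ᵒᵖ,
      (∀ R : EndCat k I, Nonempty (E.inverse.obj (Opposite.op R) ≅ quiverOf k I R)) ∧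
      (∀ (Q : QuivCat k I) (i : I),
        Nonempty (((E.functor.obj Q).unop.obj).obj (simpleAt k I i)
          ≅ endofunctorValueAt k I Q i)) :=
  ⟨QuivCat.equivEndCatOp k I, fun R => ⟨R.simpleQuiverIsoQuiverOf⟩,
    fun Q i => ⟨Q.endoObjSimpleIso i⟩⟩
end
end

section
/- Let B be a bicategory. The following data form a bicategory Ω(B): objects are pairs (b, f) of an object b of B and a 1-morphism f : b → b; 1-morphisms (b, f) → (b', f') are pairs (F, η) of a 1-morphism F : b → b' in B and a 2-morphism η : f' ∘ F ⟹ F ∘ f; 2-morphisms (F, η) ⟹ (F', η') are 2-morphisms Γ : F ⟹ F' in B satisfying (Γ ∘ f) ∙ η = η' ∙ (f' ∘ Γ); the composite of (F, η) : (b, f) → (b', f') and (G, ρ) : (b', f') → (b'', f'') is (G ∘ F, (G ∘ η) ∙ (ρ ∘ F)) (up to the associators of B); identities, vertical and horizontal composition of 2-morphisms, and the associators and unitors inherited from B satisfy all the bicategory axioms. -/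
/-!
A 2-cell of `Ω(B)` is a 2-cell of `B` subject to a property, so every equation between 2-cells
of `Ω(B)`, in particular every bicategory axiom, holds because it holds in `B`. What has to be
checked is that the structure of `B` preserves compatibility with the `η`'s: for whiskerings
this is naturality of the associator together with the interchange law, for associators and
unitors it is an instance of the coherence theorem for bicategories, and the inverse of a
compatible invertible 2-cell is again compatible.
-/

open CategoryTheory CategoryTheory.Bicategory

universe w v u

variable {B : Type u} [Bicategory.{w, v} B]

/-- An object of `Ω(B)`: an object `base` of `B` together with a 1-morphism
`loop : base ⟶ base`. -/
structure OmegaObj (B : Type u) [Bicategory.{w, v} B] : Type max u v where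
  base : B
  loop : base ⟶ base

/-- A 1-morphism `(F, η) : (b, f) ⟶ (b', f')` of `Ω(B)`: a 1-morphism `F : b ⟶ b'` of `B`
together with a 2-morphism `η : f' ∘ F ⟹ F ∘ f` (written diagrammatically as
`F ≫ f' ⟶ f ≫ F`). -/
structure OmegaHom (X Y : OmegaObj B) : Type max v w where
  F : X.base ⟶ Y.base
  η : F ≫ Y.loop ⟶ X.loop ≫ F

/-- A 2-morphism `(F, η) ⟹ (F', η')` of `Ω(B)`: a 2-morphism `Γ : F ⟹ F'` of `B` such that
`(Γ ∘ f) ∙ η = η' ∙ (f' ∘ Γ)`. -/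
@[ext]
structure OmegaTwo {X Y : OmegaObj B} (u v : OmegaHom X Y) : Type w where
  Γ : u.F ⟶ v.F
  compat : (Γ ▷ Y.loop) ≫ v.η = u.η ≫ (X.loop ◁ Γ)

/-- The hom-categories of `Ω(B)`: vertical composition of 2-morphisms is inherited from `B`. -/
instance omegaHomCategory (X Y : OmegaObj B) : Category (OmegaHom X Y) where
  Hom u v := OmegaTwo u v
  id u := ⟨𝟙 u.F, by simp⟩
  comp s t := ⟨s.Γ ≫ t.Γ, by
    rw [Bicategory.comp_whiskerRight, Category.assoc, t.compat, ← Category.assoc, s.compat,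
      Category.assoc, ← Bicategory.whiskerLeft_comp]⟩
  id_comp s := OmegaTwo.ext (Category.id_comp s.Γ)
  comp_id s := OmegaTwo.ext (Category.comp_id s.Γ)
  assoc s t r := OmegaTwo.ext (Category.assoc s.Γ t.Γ r.Γ)

/-- The objects, 1-morphisms, identities and composition of `Ω(B)`: the identity of `(b, f)`
is `(𝟙 b, (λ_ f).hom ≫ (ρ_ f).inv)`, and the composite of `(F, η)` and `(G, ρ)` is
`(F ≫ G, (G ∘ η) ∙ (ρ ∘ F))` (up to the associators of `B`). -/
def omegaCategoryStruct : CategoryStruct.{max v w} (OmegaObj B) where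
  Hom := OmegaHom
  id X := ⟨𝟙 X.base, (λ_ X.loop).hom ≫ (ρ_ X.loop).inv⟩
  comp {X Y Z} u v := ⟨u.F ≫ v.F,
    (α_ u.F v.F Z.loop).hom ≫ (u.F ◁ v.η) ≫ (α_ u.F Y.loop v.F).inv ≫ (u.η ▷ v.F)
      ≫ (α_ X.loop u.F v.F).hom⟩

section
variable {X Y Z W : OmegaObj B}

namespace OmegaHom

-- `omegaCategoryStruct`'s operations, retyped from `X ⟶ Y` to `OmegaHom X Y` so that field
-- notation and `≅` apply to their values.
abbrev id (X : OmegaObj B) : OmegaHom X X := omegaCategoryStruct.id X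
abbrev comp (u : OmegaHom X Y) (v : OmegaHom Y Z) : OmegaHom X Z := omegaCategoryStruct.comp u v

lemma comp_F (u : OmegaHom X Y) (v : OmegaHom Y Z) : (u.comp v).F = u.F ≫ v.F := rfl

lemma comp_η (u : OmegaHom X Y) (v : OmegaHom Y Z) : (u.comp v).η =
    (α_ u.F v.F Z.loop).hom ≫ (u.F ◁ v.η) ≫ (α_ u.F Y.loop v.F).inv ≫ (u.η ▷ v.F)
      ≫ (α_ X.loop u.F v.F).hom := rfl

lemma id_η (X : OmegaObj B) : (id X).η = (λ_ X.loop).hom ≫ (ρ_ X.loop).inv := rfl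

def isoMk {u v : OmegaHom X Y} (e : u.F ≅ v.F)
    (h : (e.hom ▷ Y.loop) ≫ v.η = u.η ≫ (X.loop ◁ e.hom)) : u ≅ v where
  hom := ⟨e.hom, h⟩
  inv := ⟨e.inv, by
    rw [← cancel_mono (X.loop ◁ e.hom)]
    simp [← h]⟩
  hom_inv_id := OmegaTwo.ext e.hom_inv_id
  inv_hom_id := OmegaTwo.ext e.inv_hom_id

def associator (u : OmegaHom X Y) (v : OmegaHom Y Z) (w : OmegaHom Z W) :
    (u.comp v).comp w ≅ u.comp (v.comp w) :=
  isoMk (α_ u.F v.F w.F) (by simp only [comp_η]; bicategory)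

def leftUnitor (u : OmegaHom X Y) : (id X).comp u ≅ u :=
  isoMk (λ_ u.F) (by simp only [comp_η, id_η]; bicategory)

def rightUnitor (u : OmegaHom X Y) : u.comp (id Y) ≅ u :=
  isoMk (ρ_ u.F) (by simp only [comp_η, id_η]; bicategory)

end OmegaHom

namespace OmegaTwo

def whiskerLeft (u : OmegaHom X Y) {v w : OmegaHom Y Z} (s : v ⟶ w) :
    u.comp v ⟶ u.comp w where
  Γ := u.F ◁ s.Γ
  compat := by
    simp only [OmegaHom.comp_η, OmegaHom.comp_F]
    rw [associator_naturality_middle_assoc, ← Bicategory.whiskerLeft_comp_assoc, s.compat,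
      Bicategory.whiskerLeft_comp_assoc, associator_inv_naturality_right_assoc,
      whisker_exchange_assoc, associator_naturality_right]
    simp only [Category.assoc]

def whiskerRight {u v : OmegaHom X Y} (s : u ⟶ v) (w : OmegaHom Y Z) :
    u.comp w ⟶ v.comp w where
  Γ := s.Γ ▷ w.F
  compat := by
    simp only [OmegaHom.comp_η, OmegaHom.comp_F]
    rw [associator_naturality_left_assoc, ← whisker_exchange_assoc,
      associator_inv_naturality_left_assoc, ← comp_whiskerRight_assoc, s.compat,
      comp_whiskerRight_assoc, associator_naturality_middle]
    simp only [Category.assoc]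

end OmegaTwo

end

abbrev omegaBicategory : Bicategory.{w, max v w, max u v} (OmegaObj B) where
  toCategoryStruct := omegaCategoryStruct
  homCategory := omegaHomCategory
  whiskerLeft := OmegaTwo.whiskerLeft
  whiskerRight := OmegaTwo.whiskerRight
  associator := OmegaHom.associator
  leftUnitor := OmegaHom.leftUnitor
  rightUnitor := OmegaHom.rightUnitor
  whiskerLeft_id := by intros; exact OmegaTwo.ext (whiskerLeft_id ..)
  whiskerLeft_comp := by intros; exact OmegaTwo.ext (whiskerLeft_comp ..)
  id_whiskerLeft := by intros; exact OmegaTwo.ext (id_whiskerLeft ..)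
  comp_whiskerLeft := by intros; exact OmegaTwo.ext (comp_whiskerLeft ..)
  id_whiskerRight := by intros; exact OmegaTwo.ext (id_whiskerRight ..)
  comp_whiskerRight := by intros; exact OmegaTwo.ext (comp_whiskerRight ..)
  whiskerRight_id := by intros; exact OmegaTwo.ext (whiskerRight_id ..)
  whiskerRight_comp := by intros; exact OmegaTwo.ext (whiskerRight_comp ..)
  whisker_assoc := by intros; exact OmegaTwo.ext (whisker_assoc ..)
  whisker_exchange := by intros; exact OmegaTwo.ext (whisker_exchange ..)
  pentagon := by intros; exact OmegaTwo.ext (pentagon ..)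
  triangle := by intros; exact OmegaTwo.ext (triangle ..)

/-- For any bicategory `B`, the data above — pairs `(b, f)` as objects, pairs `(F, η)` as
1-morphisms with the specified identities and composition, compatible 2-morphisms `Γ` of `B`
as 2-morphisms, and whiskerings, associators and unitors inherited from `B` — form a
bicategory `Ω(B)`. -/
theorem omega_is_bicategory (B : Type u) [Bicategory.{w, v} B] :
    ∃ inst : Bicategory.{w, max v w, max u v} (OmegaObj B),
      inst.toCategoryStruct = omegaCategoryStruct (B := B) ∧
      HEq (@Bicategory.homCategory (OmegaObj B) inst) (omegaHomCategory (B := B)) := by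
  exact ⟨omegaBicategory, rfl, HEq.rfl⟩
end
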